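/- arXiv:2601.21888 — 9 statements merged into one kernel-verified Lean document; each statement's English description precedes it below -/
import Mathlib

section
/- Let d ≥ 1 and let A, B be d×d integer matrices inducing endomorphisms α, β of the torus T^d = ℝ^d/ℤ^d. Suppose there is an invertible complex matrix P such that P⁻¹AP and P⁻¹BP are both upper triangular, with diagonal entries ξ_1, …, ξ_d and η_1, …, η_d respectively, and suppose |ξ_i| ≠ |η_i| for every 1 ≤ i ≤ d. Then for every n ≥ 1 the set S(α^n, β^n) is finite (so the pair (α, β) is synchronously tame), and the growth rate of synchronization points exists and is given by lim_{n→∞} (#S(α^n, β^n))^{1/n} = ∏_{i=1}^d max(|ξ_i|, |η_i|). Equivalently, lim_{n→∞} |det(A^n − B^n)|^{1/n} = ∏_{i=1}^d max(|ξ_i|, |η_i|). -/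
open Filter

/-- The subgroup `ℤ^d ⊆ ℝ^d` of vectors with integer coordinates. -/
def intLattice (d : ℕ) : AddSubgroup (Fin d → ℝ) where
  carrier := {x | ∀ i, ∃ m : ℤ, x i = (m : ℝ)}
  add_mem' := by
    rintro x y hx hy i
    obtain ⟨mx, hmx⟩ := hx i
    obtain ⟨my, hmy⟩ := hy i
    exact ⟨mx + my, by simp [hmx, hmy]⟩
  zero_mem' := fun i => ⟨0, by simp⟩
  neg_mem' := by
    rintro x hx i
    obtain ⟨m, hm⟩ := hx i
    exact ⟨-m, by simp [hm]⟩

/-- The `d`-dimensional torus `T^d = ℝ^d / ℤ^d`. -/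
abbrev Torus (d : ℕ) := (Fin d → ℝ) ⧸ intLattice d

/-!
Conjugated by `P`, the matrix `A^n - B^n` becomes upper triangular with diagonal entries
`ξ_i^n - η_i^n`, so `|det (A^n - B^n)| = ∏ |ξ_i^n - η_i^n|`, nonzero because `|ξ_i| ≠ |η_i|`.
The synchronization set `S(α^n, β^n)` is the kernel of the torus endomorphism induced by
`A^n - B^n`, and for a nonsingular integer matrix `M` that kernel is `M⁻¹ℤ^d / ℤ^d ≅ ℤ^d / Mℤ^d`,
of order `|det M|`. Finally `|ξ^n - η^n|` lies between two constant multiples of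
`max (|ξ|, |η|)^n`, so its `n`-th root tends to `max (|ξ|, |η|)`.
-/

open Topology

lemma tendsto_rpow_one_div_of_le_const_mul_pow {u : ℕ → ℝ} {a c C : ℝ} (ha : 0 ≤ a)
    (hc : 0 < c) (hC : 0 < C) (hlow : ∀ᶠ n in atTop, c * a ^ n ≤ u n)
    (hup : ∀ᶠ n in atTop, u n ≤ C * a ^ n) :
    Tendsto (fun n : ℕ => u n ^ ((1 : ℝ) / n)) atTop (𝓝 a) := by
  have root_const_mul_pow : ∀ {K : ℝ}, 0 < K →
      Tendsto (fun n : ℕ => (K * a ^ n) ^ ((1 : ℝ) / n)) atTop (𝓝 a) := by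
    intro K hK
    have hK1 : Tendsto (fun n : ℕ => K ^ ((1 : ℝ) / n)) atTop (𝓝 1) := by
      simpa using tendsto_const_nhds.rpow tendsto_one_div_atTop_nhds_zero_nat (Or.inl hK.ne')
    refine (by simpa using hK1.mul_const a : Tendsto _ atTop (𝓝 a)).congr' ?_
    filter_upwards [eventually_ne_atTop 0] with n hn
    rw [Real.mul_rpow hK.le (by positivity), one_div, Real.pow_rpow_inv_natCast ha hn]
  refine tendsto_of_tendsto_of_tendsto_of_le_of_le' (root_const_mul_pow hc)
    (root_const_mul_pow hC) ?_ ?_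
  · filter_upwards [hlow] with n hn
    exact Real.rpow_le_rpow (by positivity) hn (by positivity)
  · filter_upwards [hlow, hup] with n hn hn'
    exact Real.rpow_le_rpow ((by positivity : (0:ℝ) ≤ c * a ^ n).trans hn) hn' (by positivity)

section NormedDivisionRing

variable {𝕜 : Type*} [NormedDivisionRing 𝕜]

lemma tendsto_norm_pow_sub_pow_rpow_of_norm_lt {ξ η : 𝕜} (h : ‖η‖ < ‖ξ‖) :
    Tendsto (fun n : ℕ => ‖ξ ^ n - η ^ n‖ ^ ((1 : ℝ) / n)) atTop (𝓝 ‖ξ‖) := by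
  have hξ : 0 < ‖ξ‖ := (norm_nonneg η).trans_lt h
  set t := ‖η‖ / ‖ξ‖
  have ht : t < 1 := (div_lt_one hξ).mpr h
  refine tendsto_rpow_one_div_of_le_const_mul_pow hξ.le (c := 1 - t) (C := 2)
    (by linarith) two_pos ?_ (.of_forall fun n => ?_)
  · filter_upwards [eventually_ne_atTop 0] with n hn
    have hη : ‖η‖ ^ n ≤ t * ‖ξ‖ ^ n := calc
      ‖η‖ ^ n = t ^ n * ‖ξ‖ ^ n := by rw [← mul_pow, div_mul_cancel₀ _ hξ.ne']
      _ ≤ t * ‖ξ‖ ^ n := by gcongr; exact pow_le_of_le_one (by positivity) ht.le hn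
    calc (1 - t) * ‖ξ‖ ^ n ≤ ‖ξ ^ n‖ - ‖η ^ n‖ := by rw [norm_pow, norm_pow]; linarith
      _ ≤ ‖ξ ^ n - η ^ n‖ := norm_sub_norm_le _ _
  · calc ‖ξ ^ n - η ^ n‖ ≤ ‖ξ ^ n‖ + ‖η ^ n‖ := norm_sub_le _ _
      _ ≤ 2 * ‖ξ‖ ^ n := by
        rw [norm_pow, norm_pow, two_mul]; gcongr

lemma tendsto_norm_pow_sub_pow_rpow {ξ η : 𝕜} (h : ‖ξ‖ ≠ ‖η‖) :
    Tendsto (fun n : ℕ => ‖ξ ^ n - η ^ n‖ ^ ((1 : ℝ) / n)) atTop (𝓝 (max ‖ξ‖ ‖η‖)) := by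
  rcases h.lt_or_gt with h | h
  · simpa only [max_eq_right h.le, norm_sub_rev] using tendsto_norm_pow_sub_pow_rpow_of_norm_lt h
  · simpa only [max_eq_left h.le] using tendsto_norm_pow_sub_pow_rpow_of_norm_lt h

lemma tendsto_prod_norm_pow_sub_pow_rpow {ι : Type*} [Fintype ι] {ξ η : ι → 𝕜}
    (h : ∀ i, ‖ξ i‖ ≠ ‖η i‖) :
    Tendsto (fun n : ℕ => (∏ i, ‖ξ i ^ n - η i ^ n‖) ^ ((1 : ℝ) / n)) atTop
      (𝓝 (∏ i, max ‖ξ i‖ ‖η i‖)) := by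
  simp_rw [← Real.finsetProd_rpow _ _ fun i _ => norm_nonneg _]
  exact tendsto_finsetProd _ fun i _ => tendsto_norm_pow_sub_pow_rpow (h i)

lemma pow_sub_pow_ne_zero_of_norm_ne {ξ η : 𝕜} (h : ‖ξ‖ ≠ ‖η‖) {n : ℕ} (hn : n ≠ 0) :
    ξ ^ n - η ^ n ≠ 0 := by
  rw [sub_ne_zero]
  intro heq
  apply h
  simpa [norm_pow, pow_left_inj₀ (norm_nonneg ξ) (norm_nonneg η) hn] using congrArg norm heq

end NormedDivisionRing

namespace Matrix

variable {m R : Type*} [Fintype m] [CommRing R]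

lemma BlockTriangular.mul_apply_self [LinearOrder m] {M N : Matrix m m R}
    (hM : M.BlockTriangular id) (hN : N.BlockTriangular id) (i : m) :
    (M * N) i i = M i i * N i i := by
  rw [mul_apply]
  refine Finset.sum_eq_single i (fun j _ hj => ?_) (by simp)
  rcases hj.lt_or_gt with h | h
  · rw [hM h, zero_mul]
  · rw [hN h, mul_zero]

variable [DecidableEq m]

lemma conj_pow_of_isUnit_det {P : Matrix m m R} (hP : IsUnit P.det) (M : Matrix m m R) (n : ℕ) :
    (P⁻¹ * M * P) ^ n = P⁻¹ * M ^ n * P := by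
  have hPu := (isUnit_iff_isUnit_det P).mpr hP
  simpa only [coe_units_inv, hPu.unit_spec] using Units.conj_pow' hPu.unit M n

variable [LinearOrder m]

lemma BlockTriangular.pow_apply_self {M : Matrix m m R} (hM : M.BlockTriangular id) (n : ℕ)
    (i : m) : (M ^ n) i i = M i i ^ n := by
  induction n with
  | zero => simp
  | succ n ih => rw [pow_succ, (hM.pow n).mul_apply_self hM, ih, pow_succ]

lemma det_pow_sub_pow_of_conj_blockTriangular {P : Matrix m m R} (hP : IsUnit P.det)
    {M N : Matrix m m R} (hM : (P⁻¹ * M * P).BlockTriangular id)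
    (hN : (P⁻¹ * N * P).BlockTriangular id) (n : ℕ) :
    (M ^ n - N ^ n).det = ∏ i, ((P⁻¹ * M * P) i i ^ n - (P⁻¹ * N * P) i i ^ n) := by
  rw [← det_conj' ((isUnit_iff_isUnit_det P).mpr hP), Matrix.mul_sub, Matrix.sub_mul,
    ← conj_pow_of_isUnit_det hP, ← conj_pow_of_isUnit_det hP,
    det_of_isUpperTriangular ((hM.pow n).sub (hN.pow n))]
  simp only [sub_apply, hM.pow_apply_self, hN.pow_apply_self]

end Matrix

section Torus

open Matrix

variable {d : ℕ}

lemma mem_intLattice_iff {v : Fin d → ℝ} :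
    v ∈ intLattice d ↔ ∃ w : Fin d → ℤ, Int.cast ∘ w = v :=
  ⟨fun h => ⟨fun i => (h i).choose, funext fun i => (h i).choose_spec.symm⟩,
    fun ⟨w, hw⟩ i => ⟨w i, by rw [← hw]; rfl⟩⟩

lemma intCast_mulVec_intCast (M : Matrix (Fin d) (Fin d) ℤ) (w : Fin d → ℤ) :
    M.map (Int.cast : ℤ → ℝ) *ᵥ (Int.cast ∘ w) = Int.cast ∘ (M *ᵥ w) :=
  funext fun i => ((Int.castRingHom ℝ).map_mulVec M w i).symm

lemma intCast_mulVec_mem_intLattice (M : Matrix (Fin d) (Fin d) ℤ) {v : Fin d → ℝ}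
    (hv : v ∈ intLattice d) : M.map (Int.cast : ℤ → ℝ) *ᵥ v ∈ intLattice d := by
  obtain ⟨w, rfl⟩ := mem_intLattice_iff.mp hv
  rw [intCast_mulVec_intCast]
  exact mem_intLattice_iff.mpr ⟨_, rfl⟩

variable (d) in
noncomputable def torusEnd : Matrix (Fin d) (Fin d) ℤ →+* AddMonoid.End (Torus d) where
  toFun M := QuotientAddGroup.map _ _ (M.map (Int.cast : ℤ → ℝ)).mulVecLin.toAddMonoidHom
    fun _ => intCast_mulVec_mem_intLattice M
  map_one' := by
    ext x; induction x using QuotientAddGroup.induction_on with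
    | H v => exact congrArg QuotientAddGroup.mk (by simp)
  map_mul' M N := by
    ext x; induction x using QuotientAddGroup.induction_on with
    | H v => exact congrArg QuotientAddGroup.mk (by simp [Matrix.map_mul_intCast])
  map_zero' := by
    ext x; induction x using QuotientAddGroup.induction_on with
    | H v => exact congrArg QuotientAddGroup.mk (by simp)
  map_add' M N := by
    ext x; induction x using QuotientAddGroup.induction_on with
    | H v => exact congrArg QuotientAddGroup.mk (by simp [Matrix.map_add])

lemma mk_mem_ker_torusEnd_iff (M : Matrix (Fin d) (Fin d) ℤ) (v : Fin d → ℝ) :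
    (v : Torus d) ∈ (torusEnd d M).ker ↔ M.map (Int.cast : ℤ → ℝ) *ᵥ v ∈ intLattice d :=
  QuotientAddGroup.eq_zero_iff _

lemma natCard_quotient_range_toLin' (M : Matrix (Fin d) (Fin d) ℤ) (hM : M.det ≠ 0) :
    Nat.card ((Fin d → ℤ) ⧸ LinearMap.range M.toLin') = M.det.natAbs := by
  let e := LinearEquiv.ofInjective M.toLin' (mulVec_injective_of_det_ne_zero hM)
  rw [← Submodule.natAbs_det_equiv _ e]
  have he : (LinearMap.range M.toLin').subtype ∘ₗ (e : (Fin d → ℤ) →+ _).toIntLinearMap =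
      M.toLin' := LinearMap.ext fun _ => rfl
  rw [he, LinearMap.det_toLin']

lemma natCard_ker_torusEnd (M : Matrix (Fin d) (Fin d) ℤ) (hM : M.det ≠ 0) :
    Nat.card (torusEnd d M).ker = M.det.natAbs := by
  set R := M.map (Int.cast : ℤ → ℝ)
  have hR : IsUnit R.det := by
    rw [← Int.cast_det]
    exact isUnit_iff_ne_zero.mpr (Int.cast_ne_zero.mpr hM)
  have hRR (u : Fin d → ℝ) : R *ᵥ (R⁻¹ *ᵥ u) = u := by
    rw [mulVec_mulVec, mul_nonsing_inv _ hR, one_mulVec]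
  have hRR' (u : Fin d → ℝ) : R⁻¹ *ᵥ (R *ᵥ u) = u := by
    rw [mulVec_mulVec, nonsing_inv_mul _ hR, one_mulVec]
  let θ : (Fin d → ℤ) →+ Torus d := (QuotientAddGroup.mk' _).comp
    ((R⁻¹).mulVecLin.toAddMonoidHom.comp ((Int.castAddHom ℝ).compLeft (Fin d)))
  have hθ (w : Fin d → ℤ) : θ w = (R⁻¹ *ᵥ (Int.cast ∘ w) : Fin d → ℝ) := rfl
  have hrange : θ.range = (torusEnd d M).ker := by
    ext x
    constructor
    · rintro ⟨w, rfl⟩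
      rw [hθ, mk_mem_ker_torusEnd_iff, hRR]
      exact mem_intLattice_iff.mpr ⟨w, rfl⟩
    · induction x using QuotientAddGroup.induction_on with | H v => ?_
      rw [mk_mem_ker_torusEnd_iff, mem_intLattice_iff]
      rintro ⟨w, hw⟩
      exact ⟨w, by rw [hθ, hw, hRR']⟩
  have hker : θ.ker = (LinearMap.range M.toLin').toAddSubgroup := by
    ext w
    rw [AddMonoidHom.mem_ker, hθ, QuotientAddGroup.eq_zero_iff, mem_intLattice_iff]
    refine exists_congr fun u => ?_
    calc Int.cast ∘ u = R⁻¹ *ᵥ (Int.cast ∘ w) ↔ R *ᵥ (Int.cast ∘ u) = Int.cast ∘ w :=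
          ⟨fun h => by rw [h, hRR], fun h => by rw [← h, hRR']⟩
      _ ↔ M.toLin' u = w := by
          rw [intCast_mulVec_intCast, toLin'_apply, Int.cast_injective.comp_left.eq_iff]
  rw [← hrange, ← Nat.card_congr (QuotientAddGroup.quotientKerEquivRange θ).toEquiv, hker]
  exact natCard_quotient_range_toLin' M hM

lemma setOf_torusEnd_iterate_eq_iterate (M N : Matrix (Fin d) (Fin d) ℤ) (n : ℕ) :
    {x | (torusEnd d M)^[n] x = (torusEnd d N)^[n] x} = (torusEnd d (M ^ n - N ^ n)).ker := by
  ext x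
  rw [Set.mem_ofPred_eq, ← AddMonoid.End.coe_pow, ← AddMonoid.End.coe_pow, ← sub_eq_zero]
  change _ ↔ torusEnd d (M ^ n - N ^ n) x = 0
  rw [map_sub, map_pow, map_pow]
  rfl

lemma natCard_setOf_iterate_eq_iterate {M N : Matrix (Fin d) (Fin d) ℤ} {α β : Torus d → Torus d}
    (hα : ∀ v : Fin d → ℝ, α v = (M.map (Int.cast : ℤ → ℝ) *ᵥ v : Fin d → ℝ))
    (hβ : ∀ v : Fin d → ℝ, β v = (N.map (Int.cast : ℤ → ℝ) *ᵥ v : Fin d → ℝ)) {n : ℕ}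
    (hMN : (M ^ n - N ^ n).det ≠ 0) :
    Nat.card {x | α^[n] x = β^[n] x} = (M ^ n - N ^ n).det.natAbs := by
  obtain rfl : α = torusEnd d M := funext fun x => QuotientAddGroup.induction_on x hα
  obtain rfl : β = torusEnd d N := funext fun x => QuotientAddGroup.induction_on x hβ
  rw [setOf_torusEnd_iterate_eq_iterate]
  exact natCard_ker_torusEnd _ hMN

end Torus

theorem growth_rate_synchronization_points_torus_general
    (d : ℕ) (A B : Matrix (Fin d) (Fin d) ℤ)
    (α β : Torus d → Torus d)
    (hα : ∀ x : Fin d → ℝ, α (QuotientAddGroup.mk x) =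
      QuotientAddGroup.mk ((A.map (Int.cast : ℤ → ℝ)).mulVec x))
    (hβ : ∀ x : Fin d → ℝ, β (QuotientAddGroup.mk x) =
      QuotientAddGroup.mk ((B.map (Int.cast : ℤ → ℝ)).mulVec x))
    (P : Matrix (Fin d) (Fin d) ℂ) (hP : IsUnit P.det)
    (ξ η : Fin d → ℂ)
    (hAtri : (P⁻¹ * A.map (Int.cast : ℤ → ℂ) * P).BlockTriangular id)
    (hBtri : (P⁻¹ * B.map (Int.cast : ℤ → ℂ) * P).BlockTriangular id)
    (hAdiag : ∀ i, (P⁻¹ * A.map (Int.cast : ℤ → ℂ) * P) i i = ξ i)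
    (hBdiag : ∀ i, (P⁻¹ * B.map (Int.cast : ℤ → ℂ) * P) i i = η i)
    (habs : ∀ i, ‖ξ i‖ ≠ ‖η i‖) :
    (∀ n : ℕ, 1 ≤ n → {x : Torus d | α^[n] x = β^[n] x}.Finite) ∧
    Tendsto (fun n : ℕ =>
        (Nat.card {x : Torus d | α^[n] x = β^[n] x} : ℝ) ^ ((1 : ℝ) / n))
      atTop (nhds (∏ i, max (‖ξ i‖) (‖η i‖))) ∧
    Tendsto (fun n : ℕ =>
        (((A ^ n - B ^ n).det.natAbs : ℝ)) ^ ((1 : ℝ) / n))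
      atTop (nhds (∏ i, max (‖ξ i‖) (‖η i‖))) := by
  have hdet (n : ℕ) : ((A ^ n - B ^ n).det : ℂ) = ∏ i, (ξ i ^ n - η i ^ n) := by
    have h := Matrix.det_pow_sub_pow_of_conj_blockTriangular hP hAtri hBtri n
    simp only [hAdiag, hBdiag] at h
    rw [← h, ← eq_intCast (Int.castRingHom ℂ), RingHom.map_det, map_sub, map_pow, map_pow]
    rfl
  have hdet_ne {n : ℕ} (hn : n ≠ 0) : (A ^ n - B ^ n).det ≠ 0 := by
    rw [← Int.cast_ne_zero (α := ℂ), hdet]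
    exact Finset.prod_ne_zero_iff.mpr fun i _ => pow_sub_pow_ne_zero_of_norm_ne (habs i) hn
  have hcard {n : ℕ} (hn : n ≠ 0) :
      Nat.card {x : Torus d | α^[n] x = β^[n] x} = (A ^ n - B ^ n).det.natAbs :=
    natCard_setOf_iterate_eq_iterate hα hβ (hdet_ne hn)
  have hlim : Tendsto (fun n : ℕ => (((A ^ n - B ^ n).det.natAbs : ℝ)) ^ ((1 : ℝ) / n))
      atTop (nhds (∏ i, max (‖ξ i‖) (‖η i‖))) := by
    have hnorm (n : ℕ) : ((A ^ n - B ^ n).det.natAbs : ℝ) = ∏ i, ‖ξ i ^ n - η i ^ n‖ := by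
      rw [← norm_prod, ← hdet, Complex.norm_intCast, Nat.cast_natAbs, Int.cast_abs]
    simpa only [hnorm] using tendsto_prod_norm_pow_sub_pow_rpow habs
  refine ⟨fun n hn => ?_, hlim.congr' ?_, hlim⟩
  · rw [← Set.finite_coe_iff]
    refine Nat.finite_of_card_ne_zero ?_
    rw [hcard (by omega)]
    exact Int.natAbs_ne_zero.mpr (hdet_ne (by omega))
  · filter_upwards [eventually_ne_atTop 0] with n hn
    rw [hcard hn]

/-- Let `d ≥ 1` and let `A, B` be `d×d` integer matrices inducing
endomorphisms `α, β` of the torus `T^d = ℝ^d/ℤ^d`. Suppose there is an invertible complex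
matrix `P` such that `P⁻¹AP` and `P⁻¹BP` are both upper triangular, with diagonal entries
`ξ₁, …, ξ_d` and `η₁, …, η_d` respectively, and suppose `|ξ_i| ≠ |η_i|` for every `i`.
Then for every `n ≥ 1` the set `S(α^n, β^n)` is finite (the pair `(α, β)` is synchronously
tame), the growth rate of synchronization points exists and equals
`lim (#S(α^n, β^n))^{1/n} = ∏ max (|ξ_i|, |η_i|)`; equivalently
`lim |det(A^n − B^n)|^{1/n} = ∏ max (|ξ_i|, |η_i|)`. -/
theorem growth_rate_synchronization_points_torus
    (d : ℕ) (hd : 1 ≤ d) (A B : Matrix (Fin d) (Fin d) ℤ)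
    (α β : Torus d → Torus d)
    (hα : ∀ x : Fin d → ℝ, α (QuotientAddGroup.mk x) =
      QuotientAddGroup.mk ((A.map (Int.cast : ℤ → ℝ)).mulVec x))
    (hβ : ∀ x : Fin d → ℝ, β (QuotientAddGroup.mk x) =
      QuotientAddGroup.mk ((B.map (Int.cast : ℤ → ℝ)).mulVec x))
    (P : Matrix (Fin d) (Fin d) ℂ) (hP : IsUnit P.det)
    (ξ η : Fin d → ℂ)
    (hAtri : (P⁻¹ * A.map (Int.cast : ℤ → ℂ) * P).BlockTriangular id)
    (hBtri : (P⁻¹ * B.map (Int.cast : ℤ → ℂ) * P).BlockTriangular id)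
    (hAdiag : ∀ i, (P⁻¹ * A.map (Int.cast : ℤ → ℂ) * P) i i = ξ i)
    (hBdiag : ∀ i, (P⁻¹ * B.map (Int.cast : ℤ → ℂ) * P) i i = η i)
    (habs : ∀ i, ‖ξ i‖ ≠ ‖η i‖) :
    (∀ n : ℕ, 1 ≤ n → {x : Torus d | α^[n] x = β^[n] x}.Finite) ∧
    Tendsto (fun n : ℕ =>
        (Nat.card {x : Torus d | α^[n] x = β^[n] x} : ℝ) ^ ((1 : ℝ) / n))
      atTop (nhds (∏ i, max (‖ξ i‖) (‖η i‖))) ∧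
    Tendsto (fun n : ℕ =>
        (((A ^ n - B ^ n).det.natAbs : ℝ)) ^ ((1 : ℝ) / n))
      atTop (nhds (∏ i, max (‖ξ i‖) (‖η i‖))) :=
  growth_rate_synchronization_points_torus_general d A B α β hα hβ P hP ξ η hAtri hBtri hAdiag
    hBdiag habs
end

section
/- Let p be a prime and let ξ ∈ ℚ_p be a p-adic number with |ξ|_p = 1 which is not a root of unity (i.e. ξ^m ≠ 1 for every m ≥ 1). Then there exists a constant C > 0, independent of n, such that for every n ≥ 1 one has 1/n ≤ C · |ξ^n − 1|_p. -/
/-!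
Because `ξ` is a unit of `ℤ_[p]`, its image in the finite group `(ZMod (p ^ 2))ˣ` has finite
order `N`, so `η = ξ ^ N` satisfies `‖η - 1‖ ≤ p⁻²`; and `η ≠ 1` as `ξ` is not a root of unity.
For such `η` the binomial theorem gives the lifting-the-exponent identity
`‖η ^ n - 1‖ = ‖n‖ * ‖η - 1‖`, and `‖n‖ ≥ 1 / n`. Finally `‖(ξ ^ n) ^ N - 1‖ ≤ ‖ξ ^ n - 1‖`
because `(y ^ N - 1) / (y - 1)` is a sum of powers of the unit `y = ξ ^ n`, so
`1 / n ≤ ‖η - 1‖⁻¹ * ‖ξ ^ n - 1‖`.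
-/

open Finset

namespace IsUltrametricDist

lemma norm_sum_lt_of_forall_lt {M ι : Type*} [SeminormedAddCommGroup M] [IsUltrametricDist M]
    {s : Finset ι} {f : ι → M} {C : ℝ} (hC : 0 < C) (h : ∀ i ∈ s, ‖f i‖ < C) :
    ‖∑ i ∈ s, f i‖ < C := by
  rcases s.eq_empty_or_nonempty with rfl | hs
  · simpa using hC
  · exact (hs.norm_sum_le_sup'_norm f).trans_lt ((sup'_lt_iff hs).2 h)

lemma norm_add_eq_left_of_norm_lt {M : Type*} [SeminormedAddGroup M] [IsUltrametricDist M]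
    {x y : M} (h : ‖y‖ < ‖x‖) : ‖x + y‖ = ‖x‖ := by
  rw [norm_add_eq_max_of_norm_ne_norm h.ne', max_eq_left h.le]

section NormedField

variable {K : Type*} [NormedField K] [IsUltrametricDist K]

lemma norm_le_one_of_norm_sub_one_lt_one {x : K} (hx : ‖x - 1‖ < 1) : ‖x‖ ≤ 1 := by
  simpa using (norm_add_le_max (x - 1) 1).trans (max_le hx.le norm_one.le)

lemma norm_pow_sub_one_le {x : K} (hx : ‖x‖ ≤ 1) (n : ℕ) : ‖x ^ n - 1‖ ≤ ‖x - 1‖ := by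
  have hgeom : ‖∑ i ∈ range n, x ^ i‖ ≤ 1 :=
    norm_sum_le_of_forall_le_of_nonneg zero_le_one
      fun i _ => by simpa using pow_le_one₀ (norm_nonneg x) hx
  rw [← geom_sum_mul, norm_mul]
  simpa using mul_le_mul_of_nonneg_right hgeom (norm_nonneg (x - 1))

lemma norm_pow_sub_one_of_norm_natCast_eq_one {x : K} (hx : ‖x - 1‖ < 1) {m : ℕ}
    (hm : ‖(m : K)‖ = 1) : ‖x ^ m - 1‖ = ‖x - 1‖ := by
  have hgeom : ∑ i ∈ range m, x ^ i = (m : K) + ∑ i ∈ range m, (x ^ i - 1) := by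
    simp [sum_sub_distrib]
  have hsmall : ‖∑ i ∈ range m, (x ^ i - 1)‖ < ‖(m : K)‖ :=
    hm ▸ (norm_sum_le_of_forall_le_of_nonneg (norm_nonneg _)
      fun i _ => norm_pow_sub_one_le (norm_le_one_of_norm_sub_one_lt_one hx) i).trans_lt hx
  rw [← geom_sum_mul, norm_mul, hgeom, norm_add_eq_left_of_norm_lt hsmall, hm, one_mul]

lemma norm_natCast_choose_le {p : ℕ} (hp : p.Prime) {k : ℕ} (hk₀ : k ≠ 0) (hkp : k < p) :
    ‖(p.choose k : K)‖ ≤ ‖(p : K)‖ := by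
  obtain ⟨t, ht⟩ := hp.dvd_choose_self hk₀ hkp
  rw [ht, Nat.cast_mul, norm_mul]
  exact mul_le_of_le_one_right (norm_nonneg _) (norm_natCast_le_one K t)

lemma norm_lt_one_of_pow_pred_lt_norm_prime {p : ℕ} (hp : p.Prime) {y : K}
    (hy : ‖y‖ ^ (p - 1) < ‖(p : K)‖) : ‖y‖ < 1 :=
  (pow_lt_one_iff_of_nonneg (norm_nonneg y) (by have := hp.two_le; omega)).1
    (hy.trans_le (norm_natCast_le_one K p))

lemma norm_pow_prime_sub_one {p : ℕ} (hp : p.Prime) {x : K}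
    (hx : ‖x - 1‖ ^ (p - 1) < ‖(p : K)‖) : ‖x ^ p - 1‖ = ‖(p : K)‖ * ‖x - 1‖ := by
  set y := x - 1
  have hy : ‖y‖ < 1 := norm_lt_one_of_pow_pred_lt_norm_prime hp hx
  have hexpand :
      x ^ p - 1 = y * ((p : K) + ∑ k ∈ range (p - 1), y ^ (k + 1) * p.choose (k + 2)) := by
    obtain ⟨q, rfl⟩ : ∃ q, p = q + 1 := ⟨p - 1, by have := hp.two_le; omega⟩
    rw [show x = y + 1 by ring, add_pow, sum_range_succ', sum_range_succ', mul_add, mul_sum]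
    simp only [one_pow, mul_one, Nat.choose_zero_right, pow_zero, Nat.cast_one, zero_add, pow_one,
      Nat.choose_one_right, add_sub_cancel_right]
    rw [add_comm]
    exact congrArg₂ _ rfl (sum_congr rfl fun k _ => by ring)
  have htail : ‖∑ k ∈ range (p - 1), y ^ (k + 1) * (p.choose (k + 2) : K)‖ < ‖(p : K)‖ := by
    have hp₀ : 0 < ‖(p : K)‖ := (by positivity : (0 : ℝ) ≤ _).trans_lt hx
    refine norm_sum_lt_of_forall_lt hp₀ fun k hk => ?_
    rw [mem_range] at hk
    rw [norm_mul, norm_pow]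
    rcases Nat.lt_or_ge (k + 2) p with hkp | hkp
    · calc ‖y‖ ^ (k + 1) * ‖(p.choose (k + 2) : K)‖ ≤ ‖y‖ ^ (k + 1) * ‖(p : K)‖ :=
            mul_le_mul_of_nonneg_left (norm_natCast_choose_le hp (by omega) hkp) (by positivity)
        _ < ‖(p : K)‖ := mul_lt_of_lt_one_left hp₀ (pow_lt_one₀ (norm_nonneg y) hy (by omega))
    · rw [show k + 2 = p by omega, Nat.choose_self, Nat.cast_one, norm_one, mul_one,
        show k + 1 = p - 1 by omega]
      exact hx
  rw [hexpand, norm_mul, norm_add_eq_left_of_norm_lt htail, mul_comm]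

lemma norm_pow_prime_pow_sub_one {p : ℕ} (hp : p.Prime) {x : K}
    (hx : ‖x - 1‖ ^ (p - 1) < ‖(p : K)‖) (k : ℕ) :
    ‖x ^ p ^ k - 1‖ = ‖(p : K)‖ ^ k * ‖x - 1‖ := by
  have hx₁ : ‖x‖ ≤ 1 :=
    norm_le_one_of_norm_sub_one_lt_one (norm_lt_one_of_pow_pred_lt_norm_prime hp hx)
  induction k with
  | zero => simp
  | succ k ih =>
    have hxk : ‖(x ^ p ^ k) - 1‖ ^ (p - 1) < ‖(p : K)‖ :=
      (pow_le_pow_left₀ (norm_nonneg _) (norm_pow_sub_one_le hx₁ _) _).trans_lt hx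
    rw [pow_succ, pow_mul, norm_pow_prime_sub_one hp hxk, ih]
    ring

end NormedField

end IsUltrametricDist

namespace Padic

open IsUltrametricDist

variable {p : ℕ} [hp : Fact p.Prime]

theorem norm_pow_sub_one {x : ℚ_[p]} (hx : ‖x - 1‖ ^ (p - 1) < (p : ℝ)⁻¹) (n : ℕ) :
    ‖x ^ n - 1‖ = ‖(n : ℚ_[p])‖ * ‖x - 1‖ := by
  rcases eq_or_ne n 0 with rfl | hn
  · simp
  rw [← norm_p] at hx
  obtain ⟨k, m, hpm, rfl⟩ := Nat.exists_eq_pow_mul_and_not_dvd hn p hp.out.ne_one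
  have hm : ‖(m : ℚ_[p])‖ = 1 :=
    norm_natCast_eq_one_iff.2 ((Nat.Prime.coprime_iff_not_dvd hp.out).2 hpm)
  have hx₁ : ‖x - 1‖ < 1 := norm_lt_one_of_pow_pred_lt_norm_prime hp.out hx
  have hxk : ‖x ^ p ^ k - 1‖ < 1 :=
    (norm_pow_sub_one_le (norm_le_one_of_norm_sub_one_lt_one hx₁) _).trans_lt hx₁
  rw [pow_mul, norm_pow_sub_one_of_norm_natCast_eq_one hxk hm,
    norm_pow_prime_pow_sub_one hp.out hx k, Nat.cast_mul, norm_mul, hm, mul_one, Nat.cast_pow,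
    norm_pow]

theorem inv_natCast_le_norm_natCast {n : ℕ} (hn : n ≠ 0) : (n : ℝ)⁻¹ ≤ ‖(n : ℚ_[p])‖ := by
  obtain ⟨k, m, hpm, rfl⟩ := Nat.exists_eq_pow_mul_and_not_dvd hn p hp.out.ne_one
  have hm : ‖(m : ℚ_[p])‖ = 1 :=
    norm_natCast_eq_one_iff.2 ((Nat.Prime.coprime_iff_not_dvd hp.out).2 hpm)
  have hnorm : ‖((p ^ k * m : ℕ) : ℚ_[p])‖ = ((p ^ k : ℕ) : ℝ)⁻¹ := by
    push_cast
    rw [norm_mul, norm_pow, hm, norm_p, mul_one, inv_pow]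
  rw [hnorm]
  gcongr
  · exact_mod_cast pow_pos hp.out.pos k
  · exact_mod_cast Nat.le_mul_of_pos_right _ (Nat.pos_of_ne_zero (by rintro rfl; simp at hn))

theorem exists_pow_norm_sub_one_le {ξ : ℚ_[p]} (hξ : ‖ξ‖ = 1) (k : ℕ) :
    ∃ N, 0 < N ∧ ‖ξ ^ N - 1‖ ≤ (p : ℝ) ^ (-k : ℤ) := by
  have : NeZero (p ^ k) := ⟨pow_ne_zero _ hp.out.ne_zero⟩
  obtain ⟨N, hN, hpow⟩ := (isOfFinOrder_of_finite
    (Units.map (PadicInt.toZModPow k).toMonoidHom (PadicInt.mkUnits hξ))).exists_pow_eq_one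
  refine ⟨N, hN, ?_⟩
  have hker : (PadicInt.mkUnits hξ : ℤ_[p]) ^ N - 1 ∈ RingHom.ker (PadicInt.toZModPow k) := by
    rw [RingHom.mem_ker, map_sub, map_pow, map_one, sub_eq_zero]
    simpa [Units.ext_iff] using hpow
  rwa [PadicInt.ker_toZModPow, ← PadicInt.norm_le_pow_iff_mem_span_pow, PadicInt.norm_def,
    PadicInt.coe_sub, PadicInt.coe_pow, PadicInt.coe_one, PadicInt.mkUnits_eq] at hker

end Padic

/-- Let `p` be a prime and `ξ ∈ ℚ_p` with `|ξ|_p = 1` which is not a root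
of unity. Then there is a constant `C > 0`, independent of `n`, such that for every `n ≥ 1`,
`1/n ≤ C * |ξ^n − 1|_p`. -/
theorem padic_one_div_le_const_mul_norm_pow_sub_one
    (p : ℕ) [Fact p.Prime] (ξ : ℚ_[p])
    (hnorm : ‖ξ‖ = 1)
    (hroot : ∀ m : ℕ, 1 ≤ m → ξ ^ m ≠ 1) :
    ∃ C : ℝ, 0 < C ∧ ∀ n : ℕ, 1 ≤ n → (1 : ℝ) / n ≤ C * ‖ξ ^ n - 1‖ := by
  -- `p⁻²` rather than `p⁻¹`, so that `ε ^ (p - 1) < p⁻¹` holds also for `p = 2`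
  obtain ⟨N, hN, hξN⟩ := Padic.exists_pow_norm_sub_one_le hnorm 2
  set ε := ‖ξ ^ N - 1‖
  have hε : 0 < ε := norm_pos_iff.2 (sub_ne_zero.2 (hroot N hN))
  have hsmall : ε ^ (p - 1) < (p : ℝ)⁻¹ := by
    have hp : (1 : ℝ) < p := by exact_mod_cast (Fact.out : p.Prime).one_lt
    have hp₁ : p - 1 ≠ 0 := by have := (Fact.out : p.Prime).two_le; omega
    have hlt : ε < (p : ℝ)⁻¹ := hξN.trans_lt <| by
      rw [← zpow_neg_one]; exact zpow_lt_zpow_right₀ hp (by norm_num)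
    exact (pow_le_of_le_one hε.le (hlt.le.trans (inv_le_one_of_one_le₀ hp.le)) hp₁).trans_lt hlt
  refine ⟨ε⁻¹, inv_pos.2 hε, fun n hn => ?_⟩
  calc (1 : ℝ) / n ≤ ‖(n : ℚ_[p])‖ := by
        rw [one_div]; exact Padic.inv_natCast_le_norm_natCast (by omega)
    _ = ε⁻¹ * ‖(ξ ^ N) ^ n - 1‖ := by
        rw [Padic.norm_pow_sub_one hsmall, mul_comm, mul_assoc, mul_inv_cancel₀ hε.ne', mul_one]
    _ ≤ ε⁻¹ * ‖ξ ^ n - 1‖ := by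
        gcongr
        rw [← pow_mul, mul_comm, pow_mul]
        exact IsUltrametricDist.norm_pow_sub_one_le (by rw [norm_pow, hnorm, one_pow]) N
end

section
/- Let X be a finite set and let σ_1, σ_2 : X → X be two commuting bijections. Let p be the number of orbits of σ_2^{−1}∘σ_1 on X and q = #X. Then for every z ∈ ℂ with z ≠ 0 and z^{#O} ≠ 1 for each orbit O of σ_2^{−1}∘σ_1, the synchronization zeta function S_{σ_1,σ_2}(z) = ∏_O (1 − z^{#O})^{−1} satisfies the functional equation S_{σ_1,σ_2}(1/z) = (−1)^p · z^q · S_{σ_1,σ_2}(z). -/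
open Classical in
/-- The orbits of a permutation `τ` of a finite set, as a finset of finsets: the orbit of
`x` is the set of `y` lying on the same cycle of `τ` as `x`. -/
noncomputable def permOrbits {X : Type*} [Fintype X] (τ : Equiv.Perm X) :
    Finset (Finset X) :=
  Finset.univ.image fun x => Finset.univ.filter fun y => τ.SameCycle x y

/-!
Each factor satisfies `(1 - z^{-n})⁻¹ = -z^n (1 - z^n)⁻¹`; multiplying over the `p` orbits gives
the sign `(-1)^p` and the power `z^{∑ #O} = z^q`, since the orbits partition `X`.
-/

open Finset

section Orbits

variable {X : Type*} [Fintype X] (τ : Equiv.Perm X)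

open Classical in
theorem filter_sameCycle_eq_filter_sameCycle_iff {x y : X} :
    (univ.filter fun w => τ.SameCycle y w) = (univ.filter fun w => τ.SameCycle x w) ↔
      τ.SameCycle x y := by
  constructor
  · intro h
    have hy : y ∈ univ.filter fun w => τ.SameCycle y w := by simp [Equiv.Perm.SameCycle.refl]
    rw [h] at hy
    simpa using hy
  · intro h
    ext w
    simpa using ⟨h.trans, h.symm.trans⟩

open Classical in
theorem sum_card_permOrbits : ∑ O ∈ permOrbits τ, #O = Fintype.card X := by
  rw [← card_univ, card_eq_sum_card_image (fun x => univ.filter fun y => τ.SameCycle x y),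
    permOrbits]
  refine sum_congr rfl fun O hO => ?_
  obtain ⟨x, -, rfl⟩ := mem_image.mp hO
  simp only [filter_sameCycle_eq_filter_sameCycle_iff]

end Orbits

theorem inv_one_sub_one_div_pow {K : Type*} [Field K] {z : K} (hz : z ≠ 0) (n : ℕ) :
    (1 - (1 / z) ^ n)⁻¹ = -z ^ n * (1 - z ^ n)⁻¹ := by
  have hzn : z ^ n ≠ 0 := pow_ne_zero n hz
  have : 1 - (1 / z) ^ n = -(1 - z ^ n) / z ^ n := by
    rw [one_div_pow, neg_sub, sub_div, div_self hzn, one_div]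
  rw [this, inv_div, div_neg, div_eq_mul_inv, neg_mul]

theorem synchronization_zeta_functional_equation_general
    {X : Type*} [Fintype X] (σ₁ σ₂ : Equiv.Perm X)
    (z : ℂ) (hz : z ≠ 0) :
    ∏ O ∈ permOrbits (σ₂⁻¹ * σ₁), ((1 : ℂ) - (1 / z) ^ O.card)⁻¹ =
      (-1 : ℂ) ^ (permOrbits (σ₂⁻¹ * σ₁)).card * z ^ Fintype.card X *
        ∏ O ∈ permOrbits (σ₂⁻¹ * σ₁), ((1 : ℂ) - z ^ O.card)⁻¹ := by
  simp only [inv_one_sub_one_div_pow hz]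
  rw [prod_mul_distrib, prod_neg, prod_pow_eq_pow_sum, sum_card_permOrbits]

/-- Let `X` be a finite set and `σ₁, σ₂ : X → X` two commuting bijections.
Let `p` be the number of orbits of `σ₂⁻¹∘σ₁` on `X` and `q = #X`. Then for every `z ∈ ℂ`
with `z ≠ 0` and `z^{#O} ≠ 1` for each orbit `O` of `σ₂⁻¹∘σ₁`, the synchronization zeta
function `S(z) = ∏_O (1 − z^{#O})⁻¹` satisfies `S(1/z) = (−1)^p · z^q · S(z)`. -/
theorem synchronization_zeta_functional_equation
    {X : Type*} [Fintype X] (σ₁ σ₂ : Equiv.Perm X)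
    (hcomm : σ₁ * σ₂ = σ₂ * σ₁)
    (z : ℂ) (hz : z ≠ 0)
    (hroot : ∀ O ∈ permOrbits (σ₂⁻¹ * σ₁), z ^ O.card ≠ 1) :
    ∏ O ∈ permOrbits (σ₂⁻¹ * σ₁), ((1 : ℂ) - (1 / z) ^ O.card)⁻¹ =
      (-1 : ℂ) ^ (permOrbits (σ₂⁻¹ * σ₁)).card * z ^ Fintype.card X *
        ∏ O ∈ permOrbits (σ₂⁻¹ * σ₁), ((1 : ℂ) - z ^ O.card)⁻¹ :=
  synchronization_zeta_functional_equation_general σ₁ σ₂ z hz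
end

section
/- Let X be a finite set and σ_1, σ_2 : X → X two bijections, and let L ≥ 1 satisfy σ_1^L = id = σ_2^L. Then in ℤ⟦z⟧ one has the identity (1 − z^L) · Σ_{n≥1} #S(σ_1^n, σ_2^n) · z^{n−1} = Σ_{n=1}^{L} #S(σ_1^n, σ_2^n) · z^{n−1}. Equivalently, the logarithmic derivative of the synchronization zeta function equals the rational function ( Σ_{n=1}^{L} #S(σ_1^n, σ_2^n) z^{n−1} ) / (1 − z^L). -/
open PowerSeries

theorem PowerSeries.one_sub_X_pow_mul_mk_of_periodic {R : Type*} [Ring R] {f : ℕ → R} {L : ℕ}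
    (hf : Function.Periodic f L) :
    (1 - X ^ L) * mk f = ∑ n ∈ Finset.range L, C (f n) * X ^ n := by
  ext k
  rw [sub_mul, one_mul, ← (commute_X_pow (mk f) L).eq, map_sub, coeff_mul_X_pow', map_sum]
  simp only [coeff_C_mul_X_pow, coeff_mk, Finset.sum_ite_eq, Finset.mem_range]
  by_cases hk : k < L
  · rw [if_neg (by omega), if_pos hk, sub_zero]
  · obtain ⟨m, rfl⟩ := Nat.exists_eq_add_of_le (not_lt.mp hk)
    rw [if_pos (by omega), if_neg hk, Nat.add_sub_cancel_left, add_comm, hf, sub_self]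

theorem Equiv.Perm.periodic_card_pow_apply_eq {X : Type*} {σ₁ σ₂ : Equiv.Perm X} {L : ℕ}
    (h₁ : σ₁ ^ L = 1) (h₂ : σ₂ ^ L = 1) :
    Function.Periodic (fun n => Nat.card {x : X // (σ₁ ^ n) x = (σ₂ ^ n) x}) L := by
  intro n
  simp only [pow_add, h₁, h₂, mul_one]

theorem synchronization_log_derivative_rational_general
    {X : Type*} (σ₁ σ₂ : Equiv.Perm X)
    (L : ℕ) (h₁ : σ₁ ^ L = 1) (h₂ : σ₂ ^ L = 1) :
    ((1 : PowerSeries ℤ) - PowerSeries.X ^ L) *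
        (PowerSeries.mk fun n =>
          (Nat.card {x : X // (σ₁ ^ (n + 1)) x = (σ₂ ^ (n + 1)) x} : ℤ)) =
      ∑ n ∈ Finset.range L,
        (PowerSeries.C (Nat.card {x : X // (σ₁ ^ (n + 1)) x = (σ₂ ^ (n + 1)) x} : ℤ)) *
          PowerSeries.X ^ n :=
  one_sub_X_pow_mul_mk_of_periodic <|
    ((Equiv.Perm.periodic_card_pow_apply_eq h₁ h₂).add_const 1).comp ((↑) : ℕ → ℤ)

/-- Let `X` be a finite set, `σ₁, σ₂ : X → X` two bijections, and `L ≥ 1`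
with `σ₁^L = id = σ₂^L`. Then in `ℤ⟦z⟧` one has
`(1 − z^L) · Σ_{n≥1} #S(σ₁ⁿ, σ₂ⁿ)·z^{n−1} = Σ_{n=1}^{L} #S(σ₁ⁿ, σ₂ⁿ)·z^{n−1}`; equivalently,
the logarithmic derivative of the synchronization zeta function equals the rational function
`(Σ_{n=1}^{L} #S(σ₁ⁿ, σ₂ⁿ) z^{n−1}) / (1 − z^L)`. -/
theorem synchronization_log_derivative_rational
    {X : Type*} [Fintype X] (σ₁ σ₂ : Equiv.Perm X)
    (L : ℕ) (hL : 1 ≤ L) (h₁ : σ₁ ^ L = 1) (h₂ : σ₂ ^ L = 1) :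
    ((1 : PowerSeries ℤ) - PowerSeries.X ^ L) *
        (PowerSeries.mk fun n =>
          (Nat.card {x : X // (σ₁ ^ (n + 1)) x = (σ₂ ^ (n + 1)) x} : ℤ)) =
      ∑ n ∈ Finset.range L,
        (PowerSeries.C (Nat.card {x : X // (σ₁ ^ (n + 1)) x = (σ₂ ^ (n + 1)) x} : ℤ)) *
          PowerSeries.X ^ n :=
  synchronization_log_derivative_rational_general σ₁ σ₂ L h₁ h₂
end

section
/- Let X be a finite set and σ_1, σ_2 : X → X two bijections, let L ≥ 1 satisfy σ_1^L = id = σ_2^L, and let ω := exp(2πi/L) ∈ ℂ. Then for every integer k, the complex number Σ_{n=1}^{L} #S(σ_1^n, σ_2^n) · ω^{k·n} is real, i.e. its imaginary part is zero. -/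
/-! Conjugating the sum sends `ω ^ (k n)` to `ω ^ (k (L - n))`, while `σ ^ (L - n) = (σ ^ n)⁻¹`
and the synchronization set of `σ₁⁻¹, σ₂⁻¹` is the image of that of `σ₁, σ₂` under `σ₁`. So
conjugation merely reindexes the sum by `n ↦ L - n`, and the sum is real. -/

open Complex ComplexConjugate Finset

theorem Finset.sum_Icc_one_eq_sum_range {M : Type*} [AddCommMonoid M] (f : ℕ → M) {L : ℕ}
    (hf : f L = f 0) : ∑ n ∈ Icc 1 L, f n = ∑ n ∈ range L, f n := by
  cases L with
  | zero => rfl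
  | succ m =>
    rw [← Ico_add_one_right_eq_Icc, sum_Ico_eq_sum_range, Nat.add_sub_cancel, sum_range_succ,
      sum_range_succ', add_comm 1 m, hf]
    simp only [add_comm 1]

theorem Finset.sum_Icc_one_reflect {M : Type*} [AddCommMonoid M] (f : ℕ → M) (L : ℕ) :
    ∑ n ∈ Icc 1 L, f (L - n) = ∑ n ∈ range L, f n := by
  rw [← Ico_add_one_right_eq_Icc, sum_Ico_reflect f 1 le_rfl, Nat.sub_self, Nat.add_sub_cancel,
    range_eq_Ico]

theorem Complex.im_sum_Icc_one_eq_zero (f : ℕ → ℂ) {L : ℕ} (hf : f L = f 0)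
    (hconj : ∀ n ∈ Icc 1 L, conj (f n) = f (L - n)) : (∑ n ∈ Icc 1 L, f n).im = 0 := by
  rw [← conj_eq_iff_im, map_sum, sum_congr rfl hconj, sum_Icc_one_reflect,
    sum_Icc_one_eq_sum_range f hf]

theorem Complex.im_sum_Icc_one_ofReal_mul_pow_eq_zero (c : ℕ → ℝ) {ζ : ℂ} {L : ℕ}
    (hζ : ζ ^ L = 1) (hcL : c L = c 0) (hc : ∀ n ≤ L, c (L - n) = c n) :
    (∑ n ∈ Icc 1 L, (c n : ℂ) * ζ ^ n).im = 0 := by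
  refine im_sum_Icc_one_eq_zero _ (by rw [hζ, pow_zero, hcL]) fun n hn => ?_
  obtain ⟨hn1, hnL⟩ := mem_Icc.mp hn
  have hconj : conj ζ = ζ⁻¹ :=
    (RCLike.inv_eq_conj (norm_eq_one_of_pow_eq_one hζ (by omega))).symm
  have hζ0 : ζ ≠ 0 := by rintro rfl; simp [zero_pow (by omega : L ≠ 0)] at hζ
  rw [map_mul, conj_ofReal, map_pow, hconj, hc n hnL, pow_sub₀ ζ hζ0 hnL, hζ, one_mul, inv_pow]

theorem Equiv.Perm.natCard_inv_apply_eq {X : Type*} (σ τ : Perm X) :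
    Nat.card {x // σ⁻¹ x = τ⁻¹ x} = Nat.card {x // σ x = τ x} := by
  refine (Nat.card_congr (Equiv.subtypeEquiv σ fun x => ?_)).symm
  rw [Perm.eq_inv_iff_eq, show σ⁻¹ (σ x) = x from σ.symm_apply_apply x, eq_comm]

theorem Equiv.Perm.natCard_pow_sub_apply_eq {X : Type*} {σ τ : Perm X} {L : ℕ}
    (hσ : σ ^ L = 1) (hτ : τ ^ L = 1) {n : ℕ} (hn : n ≤ L) :
    Nat.card {x // (σ ^ (L - n)) x = (τ ^ (L - n)) x} = Nat.card {x // (σ ^ n) x = (τ ^ n) x} := by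
  rw [pow_sub σ hn, pow_sub τ hn, hσ, hτ, one_mul, one_mul, natCard_inv_apply_eq]

theorem synchronization_sum_root_of_unity_real_general
    {X : Type*} (σ₁ σ₂ : Equiv.Perm X)
    (L : ℕ) (h₁ : σ₁ ^ L = 1) (h₂ : σ₂ ^ L = 1)
    (ω : ℂ) (hω : ω = Complex.exp (2 * Real.pi * Complex.I / L)) :
    ∀ k : ℤ,
      (∑ n ∈ Finset.Icc 1 L,
        (Nat.card {x : X // (σ₁ ^ n) x = (σ₂ ^ n) x} : ℂ) * ω ^ (k * n)).im = 0 := by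
  intro k
  have hωL : ω ^ L = 1 := by
    rcases eq_or_ne L 0 with rfl | hL
    · exact pow_zero ω
    · exact hω ▸ (isPrimitiveRoot_exp L hL).pow_eq_one
  have hωkL : (ω ^ k) ^ L = 1 := by
    rw [← zpow_natCast, ← zpow_mul, mul_comm, zpow_mul, zpow_natCast, hωL, one_zpow]
  simp only [zpow_mul, zpow_natCast, ← ofReal_natCast]
  refine im_sum_Icc_one_ofReal_mul_pow_eq_zero _ hωkL (by simp [h₁, h₂]) fun n hn => ?_
  exact_mod_cast Equiv.Perm.natCard_pow_sub_apply_eq h₁ h₂ hn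

/-- Let `X` be a finite set and `σ₁, σ₂ : X → X` two bijections, let
`L ≥ 1` satisfy `σ₁^L = id = σ₂^L`, and let `ω := exp(2πi/L) ∈ ℂ`. Then for every integer
`k`, the complex number `Σ_{n=1}^{L} #S(σ₁^n, σ₂^n) · ω^{k·n}` is real, i.e. its imaginary
part is zero. -/
theorem synchronization_sum_root_of_unity_real
    {X : Type*} [Fintype X] (σ₁ σ₂ : Equiv.Perm X)
    (L : ℕ) (hL : 1 ≤ L) (h₁ : σ₁ ^ L = 1) (h₂ : σ₂ ^ L = 1)
    (ω : ℂ) (hω : ω = Complex.exp (2 * Real.pi * Complex.I / L)) :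
    ∀ k : ℤ,
      (∑ n ∈ Finset.Icc 1 L,
        (Nat.card {x : X // (σ₁ ^ n) x = (σ₂ ^ n) x} : ℂ) * ω ^ (k * n)).im = 0 :=
  synchronization_sum_root_of_unity_real_general σ₁ σ₂ L h₁ h₂ ω hω
end

section
/- Let φ, ψ be a synchronously tame pair of self-maps of a set X, and let S_{φ,ψ}(z) = exp(Σ_{k≥1} (#S(φ^k, ψ^k)/k) z^k) be its synchronization zeta function, viewed as a formal power series over ℂ. Then S_{φ,ψ}(z) is rational (i.e. there exist polynomials P, Q ∈ ℂ[z] with Q(0) ≠ 0 and Q·S_{φ,ψ} = P as formal power series) if and only if there exist r ∈ ℕ, integers χ_1, …, χ_r, and pairwise distinct nonzero λ_1, …, λ_r ∈ ℂ, each integral over ℤ (i.e. each an algebraic integer), such that for every k ≥ 1, #S(φ^k, ψ^k) = Σ_{i=1}^{r} χ_i · λ_i^k. -/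
/-!
Write `a k = #S(φ^k, ψ^k)` and `g = Σ_{k ≥ 1} (a k / k) z^k`, so that `z g' = Σ_{k ≥ 1} a k z^k`.
A polynomial with nonzero constant term is `c ∏ (1 - λ z)` over its reciprocal roots `λ`, and
such an `f` has `z f' / f = -Σ_{k ≥ 1} (Σ λ^k) z^k`. As `exp g` is the solution of `F' = g' F`
with `F(0) = 1`, `Q exp g = P` holds exactly when `a k` is the `k`-th power sum of the reciprocal
roots of `Q` minus that of `P`; collecting equal reciprocal roots gives `a k = Σ χ_i λ_i^k` with
integer multiplicities `χ_i ≠ 0`.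

The `λ_i` are algebraic integers because the `a k` are integers: the invertible matrix
`(λ_i^(k+1))_{k,i}` maps the ℤ-span of the vectors `(χ_i λ_i^j)_i`, `j ∈ ℕ`, into `ℤ^r`, so that
span is finitely generated, and its `i`-th coordinate is a nonzero finitely generated ℤ-submodule
of `ℂ` stable under multiplication by `λ_i`.
-/

open PowerSeries

/-- The formal exponential `exp g = Σ_{k≥0} g^k / k!` of a formal power series over `ℂ`
(intended for `g` with zero constant term). -/
noncomputable def psExpC (g : PowerSeries ℂ) : PowerSeries ℂ :=
  PowerSeries.mk fun n =>
    ∑ k ∈ Finset.range (n + 1), (PowerSeries.coeff n (g ^ k)) / (Nat.factorial k)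

namespace SynchronizationZeta

theorem psExpC_eq_subst_exp {g : ℂ⟦X⟧} (hg : constantCoeff g = 0) :
    psExpC g = (exp ℂ).subst g := by
  ext n
  rw [coeff_subst' (HasSubst.of_constantCoeff_zero' hg), finsum_eq_sum_of_support_subset
    (s := Finset.range (n + 1)), psExpC, coeff_mk]
  · refine Finset.sum_congr rfl fun k _ => ?_
    simp [div_eq_inv_mul]
  · intro k hk
    by_contra hkn
    refine hk ?_
    simp only [coeff_of_lt_order n ((Nat.cast_lt.2 (by simpa using hkn)).trans_le
      (le_order_pow_of_constantCoeff_eq_zero k hg)), smul_zero]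

theorem constantCoeff_psExpC (g : ℂ⟦X⟧) : constantCoeff (psExpC g) = 1 := by
  rw [← coeff_zero_eq_constantCoeff_apply, psExpC, coeff_mk]
  simp

theorem derivative_psExpC {g : ℂ⟦X⟧} (hg : constantCoeff g = 0) :
    d⁄dX ℂ (psExpC g) = d⁄dX ℂ g * psExpC g := by
  rw [psExpC_eq_subst_exp hg, derivative_subst (HasSubst.of_constantCoeff_zero' hg),
    derivative_exp, mul_comm]

theorem eq_of_derivative_eq_mul_self {R : Type*} [CommRing R] [IsDomain R] [CharZero R]
    {h F G : R⟦X⟧} (hF : d⁄dX R F = h * F) (hG : d⁄dX R G = h * G)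
    (h0 : constantCoeff F = constantCoeff G) : F = G := by
  ext n
  induction n using Nat.strong_induction_on with
  | _ n ih =>
    cases n with
    | zero => simpa using h0
    | succ n =>
      have : coeff (n + 1) F * (n + 1) = coeff (n + 1) G * (n + 1) := by
        rw [← coeff_derivative, ← coeff_derivative, hF, hG, coeff_mul, coeff_mul]
        refine Finset.sum_congr rfl fun p hp => ?_
        rw [ih p.2 (by linarith [Finset.HasAntidiagonal.mem_antidiagonal.1 hp])]
      exact mul_right_cancel₀ (Nat.cast_add_one_ne_zero n) this

section XLogDeriv

variable {R : Type*} [CommRing R]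

def IsXLogDeriv (f s : R⟦X⟧) : Prop :=
  X * d⁄dX R f = f * s

theorem IsXLogDeriv.mul {f g s t : R⟦X⟧} (hf : IsXLogDeriv f s) (hg : IsXLogDeriv g t) :
    IsXLogDeriv (f * g) (s + t) := by
  unfold IsXLogDeriv at *
  rw [Derivation.leibniz, smul_eq_mul, smul_eq_mul]
  linear_combination f * hg + g * hf

theorem IsXLogDeriv.C_mul {f s : R⟦X⟧} (c : R) (hf : IsXLogDeriv f s) :
    IsXLogDeriv (C c * f) s := by
  unfold IsXLogDeriv at *
  rw [Derivation.leibniz, smul_eq_mul, smul_eq_mul, derivative_C, mul_zero, add_zero]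
  linear_combination C c * hf

theorem isXLogDeriv_multiset_prod {ι : Type*} (m : Multiset ι) {f s : ι → R⟦X⟧}
    (h : ∀ i ∈ m, IsXLogDeriv (f i) (s i)) :
    IsXLogDeriv (m.map f).prod (m.map s).sum := by
  induction m using Multiset.induction_on with
  | empty => simp [IsXLogDeriv]
  | cons i m ih =>
    simp only [Multiset.map_cons, Multiset.prod_cons, Multiset.sum_cons]
    exact (h i (Multiset.mem_cons_self i m)).mul
      (ih fun j hj => h j (Multiset.mem_cons_of_mem hj))

end XLogDeriv

section TailSeries

variable {R : Type*} [CommRing R]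

noncomputable def tailSeries (a : ℕ → R) : R⟦X⟧ :=
  mk fun n => if n = 0 then 0 else a n

@[simp]
theorem coeff_tailSeries (a : ℕ → R) (n : ℕ) :
    coeff n (tailSeries a) = if n = 0 then 0 else a n :=
  coeff_mk _ _

@[simp]
theorem constantCoeff_tailSeries (a : ℕ → R) : constantCoeff (tailSeries a) = 0 := by
  simp [← coeff_zero_eq_constantCoeff_apply]

theorem multiset_sum_map_tailSeries {ι : Type*} (m : Multiset ι) (a : ι → ℕ → R) :
    (m.map fun i => tailSeries (a i)).sum = tailSeries fun n => (m.map fun i => a i n).sum := by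
  ext n
  rw [map_multiset_sum, Multiset.map_map, coeff_tailSeries]
  split_ifs <;> simp [*]

theorem isXLogDeriv_one_sub_C_mul_X (l : R) :
    IsXLogDeriv (1 - C l * X) (-tailSeries (l ^ ·)) := by
  unfold IsXLogDeriv
  ext (_ | _ | n)
  · simp
  · simp [sub_mul, mul_comm (C l) X, mul_assoc, coeff_one_X]
  · simp [sub_mul, mul_comm (C l) X, mul_assoc, coeff_succ_X_mul, coeff_X, pow_succ']

theorem X_mul_derivative_tailSeries_div (a : ℕ → ℂ) :
    X * d⁄dX ℂ (tailSeries fun n => a n / n) = tailSeries a := by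
  ext (_ | n)
  · simp
  · rw [coeff_succ_X_mul, coeff_derivative, coeff_tailSeries, coeff_tailSeries]
    simp [div_mul_cancel₀ _ (Nat.cast_add_one_ne_zero (R := ℂ) n)]

end TailSeries

section ProdOneSubMulX

noncomputable def prodOneSubMulX {R : Type*} [CommRing R] (M : Multiset R) : Polynomial R :=
  (M.map fun l => 1 - Polynomial.C l * Polynomial.X).prod

theorem coeff_zero_prodOneSubMulX {R : Type*} [CommRing R] (M : Multiset R) :
    (prodOneSubMulX M).coeff 0 = 1 := by
  simp [prodOneSubMulX, Polynomial.coeff_zero_eq_eval_zero, Polynomial.eval_multiset_prod]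

theorem isXLogDeriv_prodOneSubMulX {R : Type*} [CommRing R] (M : Multiset R) :
    IsXLogDeriv (prodOneSubMulX M : R⟦X⟧) (-tailSeries fun k => (M.map (· ^ k)).sum) := by
  have h := isXLogDeriv_multiset_prod M fun l _ => isXLogDeriv_one_sub_C_mul_X l
  rw [Multiset.sum_map_neg, multiset_sum_map_tailSeries] at h
  rw [prodOneSubMulX, ← Polynomial.coeToPowerSeries.ringHom_apply, map_multiset_prod,
    Multiset.map_map]
  simpa [Function.comp_def, Polynomial.coeToPowerSeries.ringHom_apply] using h

theorem ne_zero_of_mem_roots {K : Type*} [Field K] {P : Polynomial K} (hP : P.coeff 0 ≠ 0)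
    {ρ : K} (hρ : ρ ∈ P.roots) : ρ ≠ 0 := by
  rintro rfl
  exact hP (Polynomial.coeff_zero_eq_zero_of_zero_isRoot (Polynomial.isRoot_of_mem_roots hρ))

theorem exists_eq_C_mul_prodOneSubMulX_map_inv {K : Type*} [Field K] [IsAlgClosed K]
    {P : Polynomial K} (hP : P.coeff 0 ≠ 0) :
    ∃ c, P = Polynomial.C c * prodOneSubMulX (P.roots.map (·⁻¹)) := by
  have hroot : ∀ ρ ∈ P.roots, Polynomial.X - Polynomial.C ρ =
      Polynomial.C (-ρ) * (1 - Polynomial.C ρ⁻¹ * Polynomial.X) := by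
    intro ρ hρ
    rw [mul_sub, ← mul_assoc, ← Polynomial.C_mul, neg_mul,
      mul_inv_cancel₀ (ne_zero_of_mem_roots hP hρ)]
    simp only [map_neg, map_one]
    ring
  refine ⟨P.leadingCoeff * (P.roots.map (-·)).prod, ?_⟩
  conv_lhs => rw [(IsAlgClosed.splits P).eq_prod_roots, Multiset.map_congr rfl hroot,
    Multiset.prod_map_mul]
  rw [map_mul, map_multiset_prod, Multiset.map_map, prodOneSubMulX, Multiset.map_map, mul_assoc]
  rfl

theorem isXLogDeriv_of_coeff_zero_ne_zero {K : Type*} [Field K] [IsAlgClosed K]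
    {P : Polynomial K} (hP : P.coeff 0 ≠ 0) :
    IsXLogDeriv (P : K⟦X⟧) (-tailSeries fun k => ((P.roots.map (·⁻¹)).map (· ^ k)).sum) := by
  obtain ⟨c, hc⟩ := exists_eq_C_mul_prodOneSubMulX_map_inv hP
  conv_lhs => rw [hc, Polynomial.coe_mul, Polynomial.coe_C]
  exact (isXLogDeriv_prodOneSubMulX _).C_mul c

end ProdOneSubMulX

section RationalExp

variable {g P Q s t : ℂ⟦X⟧}

theorem X_mul_derivative_eq_sub_of_mul_psExpC_eq (hg : constantCoeff g = 0)
    (hP : IsXLogDeriv P s) (hQ : IsXLogDeriv Q t) (hQ0 : constantCoeff Q ≠ 0)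
    (h : Q * psExpC g = P) : X * d⁄dX ℂ g = s - t := by
  have hP0 : P ≠ 0 := by
    rintro rfl
    simpa [constantCoeff_psExpC, hQ0] using congrArg constantCoeff h
  have hQ0' : Q ≠ 0 := by
    rintro rfl
    simp at hQ0
  have hder := congrArg (d⁄dX ℂ) h
  rw [Derivation.leibniz, smul_eq_mul, smul_eq_mul, derivative_psExpC hg] at hder
  unfold IsXLogDeriv at hP hQ
  apply mul_left_cancel₀ (mul_ne_zero hP0 hQ0')
  linear_combination Q * hP - P * hQ + X * Q * hder - (Q * X * d⁄dX ℂ g + X * d⁄dX ℂ Q) * h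

theorem mul_psExpC_eq_of_X_mul_derivative_eq_sub (hg : constantCoeff g = 0)
    (hP : IsXLogDeriv P s) (hQ : IsXLogDeriv Q t) (hQ0 : constantCoeff Q ≠ 0)
    (hPQ : constantCoeff P = constantCoeff Q) (h : X * d⁄dX ℂ g = s - t) :
    Q * psExpC g = P := by
  set F := P * Q⁻¹
  have hFQ : F * Q = P := by rw [mul_assoc, PowerSeries.inv_mul_cancel _ hQ0, mul_one]
  have hF : d⁄dX ℂ F = d⁄dX ℂ g * F := by
    have hd := congrArg (d⁄dX ℂ) hFQ
    rw [Derivation.leibniz, smul_eq_mul, smul_eq_mul] at hd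
    unfold IsXLogDeriv at hP hQ
    have hXQ : X * Q ≠ 0 := mul_ne_zero X_ne_zero (by rintro rfl; simp at hQ0)
    apply mul_left_cancel₀ hXQ
    linear_combination X * hd + hP - F * hQ - F * Q * h - s * hFQ
  have hF0 : constantCoeff F = 1 := by
    simp [F, hPQ, hQ0]
  rw [← eq_of_derivative_eq_mul_self hF (derivative_psExpC hg)
    (by rw [hF0, constantCoeff_psExpC]), mul_comm, hFQ]

end RationalExp

section PowerSums

theorem exists_powerSum_sub_of_mul_psExpC_eq {a : ℕ → ℂ} {P Q : Polynomial ℂ}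
    (hQ : Q.coeff 0 ≠ 0) (h : (Q : ℂ⟦X⟧) * psExpC (tailSeries fun n => a n / n) = P) :
    ∃ M N : Multiset ℂ, 0 ∉ M + N ∧
      ∀ k, 1 ≤ k → a k = (M.map (· ^ k)).sum - (N.map (· ^ k)).sum := by
  have hP : P.coeff 0 ≠ 0 := by
    have h0 := congrArg constantCoeff h
    simp only [map_mul, constantCoeff_psExpC, mul_one, Polynomial.constantCoeff_coe] at h0
    rwa [← h0]
  refine ⟨Q.roots.map (·⁻¹), P.roots.map (·⁻¹), ?_, fun k hk => ?_⟩
  · simp only [Multiset.mem_add, Multiset.mem_map, _root_.inv_eq_zero, not_or, not_exists,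
      not_and]
    exact ⟨fun ρ hρ => ne_zero_of_mem_roots hQ hρ, fun ρ hρ => ne_zero_of_mem_roots hP hρ⟩
  · have hlog := X_mul_derivative_eq_sub_of_mul_psExpC_eq (constantCoeff_tailSeries _)
      (isXLogDeriv_of_coeff_zero_ne_zero hP) (isXLogDeriv_of_coeff_zero_ne_zero hQ)
      (by simpa using hQ) h
    rw [X_mul_derivative_tailSeries_div] at hlog
    have hcoeff := congrArg (coeff k) hlog
    simp only [coeff_tailSeries, Nat.one_le_iff_ne_zero.1 hk, if_false, map_sub, map_neg] at hcoeff
    linear_combination hcoeff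

theorem exists_mul_psExpC_eq_of_powerSum_sub {a : ℕ → ℂ} (M N : Multiset ℂ)
    (ha : ∀ k, 1 ≤ k → a k = (M.map (· ^ k)).sum - (N.map (· ^ k)).sum) :
    ∃ P Q : Polynomial ℂ, Q.coeff 0 ≠ 0 ∧
      (Q : ℂ⟦X⟧) * psExpC (tailSeries fun n => a n / n) = P := by
  refine ⟨prodOneSubMulX N, prodOneSubMulX M, by simp [coeff_zero_prodOneSubMulX],
    mul_psExpC_eq_of_X_mul_derivative_eq_sub (constantCoeff_tailSeries _)
      (isXLogDeriv_prodOneSubMulX N) (isXLogDeriv_prodOneSubMulX M)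
      (by simp [coeff_zero_prodOneSubMulX]) (by simp [coeff_zero_prodOneSubMulX]) ?_⟩
  rw [X_mul_derivative_tailSeries_div]
  ext (_ | k)
  · simp
  · simp only [coeff_tailSeries, map_sub, map_neg, Nat.add_one_ne_zero, if_false]
    rw [ha (k + 1) (Nat.le_add_left 1 k)]
    ring

end PowerSums

theorem multiset_sum_map_eq_sum_count_mul {α : Type*} [DecidableEq α] {L : Multiset α}
    {s : Finset α} (hs : L.toFinset ⊆ s) (f : α → ℂ) :
    (L.map f).sum = ∑ y ∈ s, (L.count y : ℂ) * f y := by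
  rw [Finset.sum_multiset_map_count, Finset.sum_subset hs]
  · simp [nsmul_eq_mul]
  · intro y _ hy
    simp [Multiset.count_eq_zero_of_notMem (Multiset.mem_toFinset.not.1 hy)]

theorem exists_injective_sum_eq_multiset_sum_sub {α : Type*} (M N : Multiset α) :
    ∃ (r : ℕ) (χ : Fin r → ℤ) (x : Fin r → α), Function.Injective x ∧ (∀ i, x i ∈ M + N) ∧
      (∀ i, χ i ≠ 0) ∧ ∀ f : α → ℂ, (M.map f).sum - (N.map f).sum = ∑ i, (χ i : ℂ) * f (x i) := by
  classical
  let χ : α → ℤ := fun y => M.count y - N.count y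
  let T := (M + N).toFinset.filter fun y => χ y ≠ 0
  let e := T.equivFin.symm
  refine ⟨T.card, fun i => χ (e i), fun i => e i, Subtype.val_injective.comp e.injective,
    fun i => Multiset.mem_toFinset.1 (Finset.mem_filter.1 (e i).2).1,
    fun i => (Finset.mem_filter.1 (e i).2).2, fun f => ?_⟩
  calc (M.map f).sum - (N.map f).sum
      = ∑ y ∈ (M + N).toFinset, (χ y : ℂ) * f y := by
        rw [multiset_sum_map_eq_sum_count_mul (s := (M + N).toFinset)
            (by rw [Multiset.toFinset_add]; exact Finset.subset_union_left) f,
          multiset_sum_map_eq_sum_count_mul (s := (M + N).toFinset)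
            (by rw [Multiset.toFinset_add]; exact Finset.subset_union_right) f,
          ← Finset.sum_sub_distrib]
        simp [χ, sub_mul]
    _ = ∑ y ∈ T, (χ y : ℂ) * f y := by
        refine (Finset.sum_filter_of_ne fun y _ hy => ?_).symm
        exact_mod_cast left_ne_zero_of_mul hy
    _ = ∑ i, (χ (e i) : ℂ) * f (e i) := by
        rw [← Finset.sum_coe_sort T]
        exact (e.sum_comp fun y : T => (χ y : ℂ) * f y).symm

theorem exists_multiset_sum_sub_eq_sum {ι α : Type*} [Fintype ι] (χ : ι → ℤ) (x : ι → α) :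
    ∃ M N : Multiset α, ∀ f : α → ℂ,
      (M.map f).sum - (N.map f).sum = ∑ i, (χ i : ℂ) * f (x i) := by
  have hsum : ∀ (n : ι → ℕ) (f : α → ℂ),
      ((∑ i, n i • {x i} : Multiset α).map f).sum = ∑ i, (n i : ℂ) * f (x i) := by
    intro n f
    rw [← Multiset.coe_mapAddMonoidHom, map_sum, ← Multiset.coe_sumAddMonoidHom, map_sum]
    simp [Multiset.map_nsmul, Multiset.sum_nsmul, nsmul_eq_mul]
  refine ⟨∑ i, (χ i).toNat • {x i}, ∑ i, (-χ i).toNat • {x i}, fun f => ?_⟩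
  rw [hsum, hsum, ← Finset.sum_sub_distrib]
  refine Finset.sum_congr rfl fun i _ => ?_
  rw [← sub_mul]
  congr 1
  exact_mod_cast Int.toNat_sub_toNat_neg (χ i)

theorem isIntegral_of_span_mul_pow_fg {R A : Type*} [CommRing R] [CommRing A] [IsDomain A]
    [Algebra R A] {c x : A} (hc : c ≠ 0)
    (hfg : (Submodule.span R (Set.range fun j : ℕ => c * x ^ j)).FG) : IsIntegral R x := by
  set N := Submodule.span R (Set.range fun j : ℕ => c * x ^ j)
  have hcN : c ∈ N := Submodule.subset_span ⟨0, by simp⟩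
  have hxN : N.map (LinearMap.mulLeft R x) ≤ N := by
    rw [Submodule.map_span]
    refine Submodule.span_mono ?_
    rintro _ ⟨_, ⟨j, rfl⟩, rfl⟩
    exact ⟨j + 1, by simp [pow_succ]; ring⟩
  exact isIntegral_of_smul_mem_submodule N (N.ne_bot_iff.2 ⟨c, hcN, hc⟩) hfg x
    fun n hn => hxN ⟨n, hn, rfl⟩

theorem span_mul_pow_fg {r : ℕ} {χ lam : Fin r → ℂ} (hinj : Function.Injective lam)
    (hlam : ∀ i, lam i ≠ 0) {b : ℕ → ℤ} (hb : ∀ k, 1 ≤ k → ∑ i, χ i * lam i ^ k = b k) :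
    (Submodule.span ℤ (Set.range fun (j : ℕ) (i : Fin r) => χ i * lam i ^ j)).FG := by
  let V : Matrix (Fin r) (Fin r) ℂ := Matrix.of fun k i => lam i ^ (k + 1 : ℕ)
  have hV : V = (Matrix.vandermonde lam).transpose * Matrix.diagonal lam := by
    ext k i
    simp [V, Matrix.vandermonde, pow_succ]
  have hVinj : Function.Injective V.mulVec := by
    refine Matrix.mulVec_injective_of_det_ne_zero ?_
    rw [hV, Matrix.det_mul, Matrix.det_transpose, Matrix.det_diagonal]
    exact mul_ne_zero (Matrix.det_vandermonde_ne_zero_iff.2 hinj)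
      (Finset.prod_ne_zero_iff.2 fun i _ => hlam i)
  let castVec := LinearMap.compLeft (Int.castAddHom ℂ).toIntLinearMap (Fin r)
  have hVu : ∀ j : ℕ, V.mulVec (fun i => χ i * lam i ^ j) = castVec fun k => b (k + 1 + j) := by
    intro j
    ext k
    simp only [Matrix.mulVec, dotProduct, V, Matrix.of_apply, castVec, LinearMap.compLeft_apply,
      Function.comp_apply, AddMonoidHom.coe_toIntLinearMap, Int.coe_castAddHom]
    rw [← hb _ (by omega)]
    exact Finset.sum_congr rfl fun i _ => by ring
  refine Submodule.fg_of_fg_map_injective (V.mulVecLin.restrictScalars ℤ) hVinj ?_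
  rw [Submodule.map_span, ← Set.range_comp]
  have : (V.mulVecLin.restrictScalars ℤ) ∘ (fun (j : ℕ) (i : Fin r) => χ i * lam i ^ j) =
      castVec ∘ fun j k => b (k + 1 + j) := funext hVu
  rw [this, Set.range_comp, ← Submodule.map_span]
  exact (IsNoetherian.noetherian _).map _

theorem isIntegral_of_sum_mul_pow_eq_intCast {r : ℕ} {χ lam : Fin r → ℂ}
    (hinj : Function.Injective lam) (hlam : ∀ i, lam i ≠ 0) (hχ : ∀ i, χ i ≠ 0) {b : ℕ → ℤ}
    (hb : ∀ k, 1 ≤ k → ∑ i, χ i * lam i ^ k = b k) (i : Fin r) : IsIntegral ℤ (lam i) := by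
  refine isIntegral_of_span_mul_pow_fg (hχ i) ?_
  have := (span_mul_pow_fg hinj hlam hb).map (LinearMap.proj i)
  rwa [Submodule.map_span, ← Set.range_comp] at this

theorem exists_mul_psExpC_eq_iff_eq_sum_mul_pow (a : ℕ → ℤ) :
    (∃ P Q : Polynomial ℂ, Q.coeff 0 ≠ 0 ∧
        (Q : ℂ⟦X⟧) * psExpC (tailSeries fun n => (a n : ℂ) / n) = P) ↔
      ∃ (r : ℕ) (χ : Fin r → ℤ) (lam : Fin r → ℂ),
        Function.Injective lam ∧ (∀ i, lam i ≠ 0) ∧ (∀ i, IsIntegral ℤ (lam i)) ∧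
        ∀ k, 1 ≤ k → (a k : ℂ) = ∑ i, (χ i : ℂ) * lam i ^ k := by
  constructor
  · rintro ⟨P, Q, hQ, h⟩
    obtain ⟨M, N, hMN, hpow⟩ := exists_powerSum_sub_of_mul_psExpC_eq hQ h
    obtain ⟨r, χ, lam, hinj, hmem, hχ, hsum⟩ := exists_injective_sum_eq_multiset_sum_sub M N
    have hlam : ∀ i, lam i ≠ 0 := fun i h0 => hMN (h0 ▸ hmem i)
    have ha : ∀ k, 1 ≤ k → (a k : ℂ) = ∑ i, (χ i : ℂ) * lam i ^ k :=
      fun k hk => (hpow k hk).trans (hsum _)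
    exact ⟨r, χ, lam, hinj, hlam, isIntegral_of_sum_mul_pow_eq_intCast hinj hlam
      (fun i => Int.cast_ne_zero.2 (hχ i)) fun k hk => (ha k hk).symm, ha⟩
  · rintro ⟨r, χ, lam, -, -, -, ha⟩
    obtain ⟨M, N, hMN⟩ := exists_multiset_sum_sub_eq_sum χ lam
    exact exists_mul_psExpC_eq_of_powerSum_sub M N fun k hk => (ha k hk).trans (hMN _).symm

end SynchronizationZeta

open SynchronizationZeta

theorem synchronization_zeta_rational_iff_counts_eigenvalue_sum_general
    {X : Type*} (φ ψ : X → X) :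
    (∃ P Q : Polynomial ℂ, Q.coeff 0 ≠ 0 ∧
        (Q : PowerSeries ℂ) *
          psExpC (PowerSeries.mk fun n =>
            if n = 0 then 0
            else (Nat.card {x : X | φ^[n] x = ψ^[n] x} : ℂ) / n) =
        (P : PowerSeries ℂ)) ↔
      (∃ (r : ℕ) (χ : Fin r → ℤ) (lam : Fin r → ℂ),
        Function.Injective lam ∧ (∀ i, lam i ≠ 0) ∧ (∀ i, IsIntegral ℤ (lam i)) ∧
        ∀ k : ℕ, 1 ≤ k →
          (Nat.card {x : X | φ^[k] x = ψ^[k] x} : ℂ) = ∑ i, (χ i : ℂ) * lam i ^ k) := by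
  simpa only [Int.cast_natCast, tailSeries] using
    exists_mul_psExpC_eq_iff_eq_sum_mul_pow fun n => Nat.card {x : X | φ^[n] x = ψ^[n] x}

/-- Let `φ, ψ` be a synchronously tame pair of self-maps of a set `X`,
with synchronization zeta function `S_{φ,ψ}(z) = exp (Σ_{k≥1} (#S(φ^k, ψ^k)/k) z^k)` over
`ℂ`. Then `S_{φ,ψ}` is rational if and only if there exist `r ∈ ℕ`, integers `χ₁, …, χ_r`
and pairwise distinct nonzero algebraic integers `λ₁, …, λ_r ∈ ℂ` such that
`#S(φ^k, ψ^k) = Σ_i χ_i λ_i^k` for every `k ≥ 1`. -/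
theorem synchronization_zeta_rational_iff_counts_eigenvalue_sum
    {X : Type*} (φ ψ : X → X)
    (htame : ∀ n : ℕ, 1 ≤ n → {x : X | φ^[n] x = ψ^[n] x}.Finite) :
    (∃ P Q : Polynomial ℂ, Q.coeff 0 ≠ 0 ∧
        (Q : PowerSeries ℂ) *
          psExpC (PowerSeries.mk fun n =>
            if n = 0 then 0
            else (Nat.card {x : X | φ^[n] x = ψ^[n] x} : ℂ) / n) =
        (P : PowerSeries ℂ)) ↔
      (∃ (r : ℕ) (χ : Fin r → ℤ) (lam : Fin r → ℂ),
        Function.Injective lam ∧ (∀ i, lam i ≠ 0) ∧ (∀ i, IsIntegral ℤ (lam i)) ∧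
        ∀ k : ℕ, 1 ≤ k →
          (Nat.card {x : X | φ^[k] x = ψ^[k] x} : ℂ) = ∑ i, (χ i : ℂ) * lam i ^ k) :=
  synchronization_zeta_rational_iff_counts_eigenvalue_sum_general φ ψ
end

section
/- Let λ_1, …, λ_r ∈ ℂ be pairwise distinct algebraic numbers over ℚ and χ_1, …, χ_r ∈ ℤ be integers such that Σ_{i=1}^{r} χ_i · λ_i^k ∈ ℤ for every k ≥ 1. If λ_i and λ_j are algebraically conjugate, i.e. have the same minimal polynomial over ℚ, then χ_i = χ_j. -/
/-!
All `λ_i` live in the algebraic closure `L` of `ℚ` inside `ℂ`, which is normal over `ℚ`, so a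
`ℚ`-automorphism `σ` of `L` carries `λ_j` to its conjugate `λ_i`. Since the power sums
`Σ χ_m λ_m^k` are integers, `σ` fixes them: the families `(χ_m, λ_m)` and `(χ_m, σ λ_m)` have the
same power sums for `k ≥ 1`. Geometric sequences `k ↦ z^k` are linearly independent (Dedekind), so
such power sums determine the weight sitting at every nonzero point; at the point `λ_i = σ λ_j`
this weight is `χ_i` for the first family and `χ_j` for the second.
-/

open Finsupp

theorem linearIndependent_pow_seq (K : Type*) [CommRing K] [IsDomain K] :
    LinearIndependent K (fun x : K => fun k : ℕ => x ^ k) := by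
  have hpowers : Function.Injective (powersHom K) := fun x y hxy => by
    simpa using DFunLike.congr_fun hxy (Multiplicative.ofAdd 1)
  have hfunLeft := LinearMap.funLeft_injective_of_surjective K K
    (Multiplicative.ofAdd : ℕ → Multiplicative ℕ) Multiplicative.ofAdd.surjective
  exact (((linearIndependent_monoidHom (Multiplicative ℕ) K).comp _ hpowers).map' _
    (LinearMap.ker_eq_bot.mpr hfunLeft))

theorem Finsupp.apply_eq_of_linearCombination_pow_eq {K : Type*} [CommRing K] [IsDomain K]
    {f g : K →₀ K}
    (h : ∀ k, 1 ≤ k → linearCombination K (· ^ k) f = linearCombination K (· ^ k) g)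
    {x : K} (hx : x ≠ 0) : f x = g x := by
  -- Rescaling the weight at `z` by `z` turns the power sums from exponent `1` on into all of them.
  let l : K →₀ K := onFinset (f - g).support (fun z => (f - g) z * z) fun z hz =>
    mem_support_iff.mpr (left_ne_zero_of_mul hz)
  have hl : linearCombination K (fun z k => z ^ k) l = 0 := by
    ext k
    have := sub_eq_zero.mpr (h (k + 1) le_add_self)
    rw [← map_sub, linearCombination_apply, Finsupp.sum] at this
    rw [linearCombination_onFinset, Finset.sum_apply, Pi.zero_apply, ← this]
    refine Finset.sum_congr rfl fun z _ => ?_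
    simp only [smul_eq_mul, Pi.smul_apply]
    ring
  have := DFunLike.congr_fun (linearIndependent_iff.mp (linearIndependent_pow_seq K) l hl) x
  simpa [l, sub_eq_zero, hx] using this

theorem Finsupp.linearCombination_mapDomain_linearEquivFunOnFinite_symm {R M α ι : Type*}
    [CommSemiring R] [AddCommMonoid M] [Module R M] [Fintype ι] (v : α → M) (x : ι → α)
    (a : ι → R) :
    linearCombination R v (mapDomain x ((linearEquivFunOnFinite R R ι).symm a)) =
      ∑ i, a i • v (x i) := by
  rw [linearCombination_mapDomain, linearCombination_eq_fintype_linearCombination_apply,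
    Fintype.linearCombination_apply]
  rfl

theorem coeff_eq_of_sum_mul_pow_eq {K ι κ : Type*} [CommRing K] [IsDomain K] [Fintype ι]
    [Fintype κ] {x : ι → K} {y : κ → K} (hx : Function.Injective x) (hy : Function.Injective y)
    {a : ι → K} {b : κ → K} (h : ∀ k, 1 ≤ k → ∑ i, a i * x i ^ k = ∑ j, b j * y j ^ k)
    {i : ι} {j : κ} (hij : x i = y j) (hi : x i ≠ 0) : a i = b j := by
  have := apply_eq_of_linearCombination_pow_eq
    (f := mapDomain x ((linearEquivFunOnFinite K K ι).symm a))
    (g := mapDomain y ((linearEquivFunOnFinite K K κ).symm b))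
    (fun k hk => by
      simpa only [linearCombination_mapDomain_linearEquivFunOnFinite_symm, smul_eq_mul]
        using h k hk) hi
  rwa [mapDomain_apply hx, hij, mapDomain_apply hy] at this

theorem coeff_eq_of_isConjRoot {F L ι : Type*} [Field F] [Field L] [CharZero L] [Algebra F L]
    [Normal F L] [Fintype ι] {x : ι → L} (hx : Function.Injective x) (c : ι → ℤ)
    (hint : ∀ k, 1 ≤ k → ∃ n : ℤ, ∑ m, (c m : L) * x m ^ k = n) {i j : ι}
    (hconj : IsConjRoot F (x i) (x j)) : c i = c j := by
  obtain ⟨σ, hσ⟩ := hconj.exists_algEquiv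
  have hsum (k : ℕ) (hk : 1 ≤ k) : ∑ m, (c m : L) * x m ^ k = ∑ m, (c m : L) * σ (x m) ^ k := by
    obtain ⟨n, hn⟩ := hint k hk
    have hσ_sum : σ (∑ m, (c m : L) * x m ^ k) = ∑ m, (c m : L) * σ (x m) ^ k := by
      simp only [map_sum, map_mul, map_pow, map_intCast]
    rw [← hσ_sum, hn, map_intCast]
  obtain hi | hi := eq_or_ne (x i) 0
  · obtain rfl : i = j := hx (hi.trans (hi ▸ hconj).eq_zero.symm)
    rfl
  exact_mod_cast coeff_eq_of_sum_mul_pow_eq hx (σ.injective.comp hx) hsum hσ.symm hi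

/-- Let `λ₁, …, λ_r ∈ ℂ` be pairwise distinct algebraic numbers over `ℚ`
and `χ₁, …, χ_r ∈ ℤ` be integers such that `Σ_i χ_i·λ_i^k ∈ ℤ` for every `k ≥ 1`. If `λ_i`
and `λ_j` are algebraically conjugate (have the same minimal polynomial over `ℚ`), then
`χ_i = χ_j`. -/
theorem coeffs_eq_of_conjugate
    (r : ℕ) (lam : Fin r → ℂ) (χ : Fin r → ℤ)
    (hdist : Function.Injective lam)
    (halg : ∀ i, IsAlgebraic ℚ (lam i))
    (hint : ∀ k : ℕ, 1 ≤ k → ∃ m : ℤ, ∑ i, (χ i : ℂ) * lam i ^ k = (m : ℂ))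
    (i j : Fin r) (hconj : minpoly ℚ (lam i) = minpoly ℚ (lam j)) :
    χ i = χ j := by
  let μ (m : Fin r) : algebraicClosure ℚ ℂ := ⟨lam m, mem_algebraicClosure_iff.mpr (halg m)⟩
  -- Instance search misses this: it finds the `ℚ`-algebra structure as `DivisionRing.toRatAlgebra`.
  have : Normal ℚ (algebraicClosure ℚ ℂ) :=
    @IsAlgClosure.normal _ _ _ _ _ (algebraicClosure.isAlgClosure ℚ ℂ)
  have hμ : Function.Injective μ := fun a b hab => hdist (congrArg Subtype.val hab)
  refine coeff_eq_of_isConjRoot (F := ℚ) hμ χ (fun k hk => ?_) ?_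
  · obtain ⟨n, hn⟩ := hint k hk
    refine ⟨n, Subtype.ext ?_⟩
    simpa only [IntermediateField.coe_sum, IntermediateField.coe_mul,
      IntermediateField.coe_pow, SubringClass.coe_intCast] using hn
  · exact (IntermediateField.minpoly_eq (μ i)).trans
      (hconj.trans (IntermediateField.minpoly_eq (μ j)).symm)
end

section
/- Let (X, d) be a compact metric space and α, β : X → X commuting homeomorphisms forming a synchronously tame pair, and set f := β^{−1}∘α. Assume f is expansive (there exists ε > 0 such that for all x ≠ y in X there is n ∈ ℤ with d(f^n x, f^n y) > ε) and satisfies specification (for each ε > 0 there is p(ε) ∈ ℕ such that: given points x_1, …, x_k ∈ X and integer intervals I_1, …, I_k contained in [a, b] with pairwise distance at least p(ε), there exists x ∈ X with f^{b−a+p(ε)}(x) = x and d(f^j x, f^j x_i) < ε for all j ∈ I_i and all i). Then the growth rate of synchronization points exists and equals lim_{n→∞} (#S(α^n, β^n))^{1/n} = exp(h(f)), where h(f) is the topological entropy of f. -/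
open Filter

/-- A homeomorphism `f` of a metric space is expansive if there is `ε > 0` such that any
two distinct points are separated beyond `ε` by some (positive or negative) iterate. -/
def ExpansiveHomeo {X : Type*} [MetricSpace X] (f : X ≃ₜ X) : Prop :=
  ∃ ε : ℝ, 0 < ε ∧ ∀ x y : X, x ≠ y →
    ∃ n : ℤ, ε < dist ((f.toEquiv ^ n) x) ((f.toEquiv ^ n) y)

/-- Bowen's specification property for a homeomorphism `f`: for every `ε > 0` there is
`p(ε) ∈ ℕ` such that, given finitely many points `x i` and integer intervals
`[l i, u i] ⊆ [a, b]` with pairwise distance at least `p(ε)`, there is a point `x₀` with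
`f^{b−a+p(ε)} x₀ = x₀` shadowing each orbit segment with precision `ε`. -/
def SpecificationHomeo {X : Type*} [MetricSpace X] (f : X ≃ₜ X) : Prop :=
  ∀ ε : ℝ, 0 < ε → ∃ p : ℕ,
    ∀ (k : ℕ) (x : Fin k → X) (a b : ℤ) (l u : Fin k → ℤ),
      (∀ i, a ≤ l i ∧ l i ≤ u i ∧ u i ≤ b) →
      (∀ i j, i ≠ j → ∀ s ∈ Set.Icc (l i) (u i), ∀ t ∈ Set.Icc (l j) (u j),
        (p : ℤ) ≤ |s - t|) →
      ∃ x₀ : X, (f.toEquiv ^ (b - a + p)) x₀ = x₀ ∧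
        ∀ i, ∀ m ∈ Set.Icc (l i) (u i),
          dist ((f.toEquiv ^ m) x₀) ((f.toEquiv ^ m) (x i)) < ε

/-!
Since `α` and `β` commute, `S(αⁿ, βⁿ)` is the set of `n`-periodic points of `f = β⁻¹ ∘ α`.
Expansiveness with constant `ε` makes the `n`-periodic points an `(n, ε/2)`-separated set, so there
are finitely many of them and their exponential growth rate is at most `h(f)`. Conversely, for
every scale `δ`, specification with gap `p` shadows any `⌊m / (n + p)⌋` points of an
`(n, δ)`-separated set `E`, taken as orbit segments of length `n` placed `n + p` apart, by one
`m`-periodic point, and distinct choices give distinct periodic points. Hence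
`#Fix(fᵐ) ≥ #E ^ ⌊m / (n + p)⌋`, and the lower growth rate of `#Fix(fᵐ)` is at least `h(f)`.
-/

open Function Set Dynamics ExpGrowth
open scoped Topology Uniformity ENNReal

lemma Equiv.Perm.zpow_apply_eq_pow_emod {α : Type*} (σ : Equiv.Perm α) {m : ℕ} (hm : m ≠ 0)
    {x : α} (hx : (σ ^ m) x = x) (j : ℤ) : (σ ^ j) x = (σ ^ (j % m).toNat) x := by
  have hmul : (σ ^ ((m : ℤ) * (j / m))) x = x := by
    rw [zpow_mul, zpow_natCast]
    exact zpow_apply_eq_self_of_apply_eq_self hx _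
  conv_lhs => rw [← Int.emod_add_mul_ediv j m, zpow_add, Equiv.Perm.mul_apply, hmul]
  rw [← zpow_natCast, Int.toNat_of_nonneg (Int.emod_nonneg j (by exact_mod_cast hm))]

lemma Homeomorph.toEquiv_zpow_natCast_apply {X : Type*} [TopologicalSpace X] (f : X ≃ₜ X)
    (n : ℕ) (x : X) : (f.toEquiv ^ (n : ℤ)) x = f^[n] x := by
  simp [Equiv.Perm.coe_pow]

lemma Function.Commute.setOf_iterate_eq_iterate_eq {X : Type*} {α : X → X} {β : X ≃ X}
    (h : Function.Commute α β) (n : ℕ) :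
    {x | α^[n] x = β^[n] x} = ptsOfPeriod (β.symm ∘ α) n := by
  have hsymm : Function.Commute β.symm α := fun x => β.injective (by simp [← h (β.symm x)])
  ext x
  simp only [mem_ofPred_eq, mem_ptsOfPeriod, IsPeriodicPt, IsFixedPt, hsymm.comp_iterate,
    comp_apply]
  constructor
  · intro hx
    rw [hx]
    exact (β.left_inv.iterate n) x
  · intro hx
    conv_rhs => rw [← hx]
    exact ((β.right_inv.iterate n) _).symm

namespace Dynamics

variable {X : Type*} {T : X → X} {F : Set X} {U : SetRel X X} {n : ℕ}

lemma IsDynNetIn.subset {s t : Set X} (hs : IsDynNetIn T F U n s) (hts : t ⊆ s) :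
    IsDynNetIn T F U n t :=
  ⟨hts.trans hs.1, hs.2.subset hts⟩

lemma IsDynNetIn.ncard_le_netMaxcard {s : Set X} (hs : IsDynNetIn T F U n s) :
    (s.ncard : ℕ∞) ≤ netMaxcard T F U n := by
  by_cases hfin : s.Finite
  · rw [ncard_eq_toFinset_card s hfin]
    exact (hfin.coe_toFinset.symm ▸ hs).card_le_netMaxcard
  · simp [Set.Infinite.ncard hfin]

lemma IsDynNetIn.finite {s : Set X} (hs : IsDynNetIn T F U n s)
    (hU : netMaxcard T F U n ≠ ⊤) : s.Finite := by
  obtain ⟨N, hN⟩ := ENat.ne_top_iff_exists.1 hU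
  by_contra hinf
  obtain ⟨t, hts, htcard⟩ := Set.Infinite.exists_subset_card_eq hinf (N + 1)
  have := (hs.subset hts).card_le_netMaxcard
  rw [htcard, ← hN, Nat.cast_le] at this
  omega

end Dynamics

lemma EReal.tendsto_natCast_div_div_atTop (k : ℕ) :
    Tendsto (fun m : ℕ => ((m / k : ℕ) : EReal) / m) atTop (𝓝 ((k : ℝ)⁻¹ : ℝ)) := by
  have hreal : Tendsto (fun m : ℕ => ((m / k : ℕ) : ℝ) / m) atTop (𝓝 (k : ℝ)⁻¹) := by
    refine ((tendsto_nat_floor_mul_div_atTop (inv_nonneg.2 (Nat.cast_nonneg' k))).comp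
      tendsto_natCast_atTop_atTop).congr fun m => ?_
    simp [inv_mul_eq_div, Nat.floor_div_eq_div]
  refine (EReal.tendsto_coe.2 hreal).congr fun m => ?_
  rw [EReal.coe_div]
  rfl

namespace ExpGrowth

open EReal

lemma expGrowthSup_le_of_eventually_le_exp_mul {u : ℕ → ℝ≥0∞} {L : EReal} (p : ℕ)
    (h : ∀ᶠ n in atTop, u n ≤ exp (((n + p : ℕ) : EReal) * L)) : expGrowthSup u ≤ L := by
  rcases eq_or_ne L ⊤ with rfl | hL
  · exact le_top
  have hpL : (p : EReal) * L ≠ ⊤ := (EReal.mul_ne_top _ _).2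
    ⟨.inl (natCast_ne_bot p), .inl (Nat.cast_nonneg' p), .inl (natCast_ne_top p), .inr hL⟩
  calc expGrowthSup u ≤ expGrowthSup fun n => exp (L * n) :=
        expGrowthSup_le_of_eventually_le (b := exp (p * L)) (exp_eq_top_iff.not.2 hpL) <|
          h.mono fun n hn => by
            rwa [← exp_add, mul_comm L, add_comm, ← right_distrib_of_nonneg (Nat.cast_nonneg' n)
              (Nat.cast_nonneg' p), ← Nat.cast_add]
    _ = L := expGrowthSup_exp

lemma le_exp_mul_expGrowthInf_of_pow_div_le {u : ℕ → ℝ≥0∞} {c k : ℕ} (hk : k ≠ 0)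
    (h : ∀ᶠ m in atTop, (c : ℝ≥0∞) ^ (m / k) ≤ u m) : (c : ℝ≥0∞) ≤ exp (k * expGrowthInf u) := by
  rcases Nat.eq_zero_or_pos c with rfl | hc
  · simp
  have hmono : Monotone fun j : ℕ => (c : ℝ≥0∞) ^ j := pow_right_mono₀ (by exact_mod_cast hc)
  have hcomp := hmono.expGrowthInf_comp (tendsto_natCast_div_div_atTop k) (by simp [hk])
    (coe_ne_top _)
  rw [expGrowthInf_pow] at hcomp
  have hlow : (((k : ℝ)⁻¹ : ℝ) : EReal) * ENNReal.log c ≤ expGrowthInf u :=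
    hcomp ▸ expGrowthInf_eventually_monotone h
  calc (c : ℝ≥0∞) = exp (k * ((((k : ℝ)⁻¹ : ℝ) : EReal) * ENNReal.log c)) := by
        rw [← mul_assoc, ← coe_coe_eq_natCast, ← EReal.coe_mul,
          mul_inv_cancel₀ (by exact_mod_cast hk), EReal.coe_one, one_mul, ENNReal.exp_log]
    _ ≤ exp (k * expGrowthInf u) :=
        exp_monotone (mul_le_mul_of_nonneg_left hlow (Nat.cast_nonneg' k))

lemma tendsto_rpow_one_div_of_le_expGrowthInf_of_expGrowthSup_le {u : ℕ → ℕ} {a : EReal}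
    (hu : ∀ᶠ n in atTop, u n ≠ 0) (hinf : a ≤ expGrowthInf fun n => (u n : ℝ≥0∞))
    (hsup : expGrowthSup (fun n => (u n : ℝ≥0∞)) ≤ a) (ha : a ≠ ⊤) :
    Tendsto (fun n : ℕ => (u n : ℝ) ^ ((1 : ℝ) / n)) atTop (𝓝 (Real.exp a.toReal)) := by
  have hnonneg : 0 ≤ a := (Eventually.le_expGrowthInf (hu.mono fun n hn => by
    simpa [Nat.one_le_iff_ne_zero] using hn)).trans (expGrowthInf_le_expGrowthSup.trans hsup)
  lift a to ℝ using ⟨ha, ne_bot_of_le_ne_bot zero_ne_bot hnonneg⟩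
  have hlog : Tendsto (fun n : ℕ => Real.log (u n) / n) atTop (𝓝 a) := by
    refine tendsto_coe.1 ((tendsto_of_le_liminf_of_limsup_le hinf hsup).congr' ?_)
    filter_upwards [hu] with n hn
    rw [← ENNReal.ofReal_natCast, ENNReal.log_ofReal_of_pos (by positivity), EReal.coe_div,
      coe_coe_eq_natCast]
  refine ((Real.continuous_exp.tendsto _).comp hlog).congr' ?_
  filter_upwards [hu] with n hn
  rw [comp_apply, Real.rpow_def_of_pos (by positivity), mul_one_div]

end ExpGrowth

lemma Dynamics.netEntropyEntourage_le_of_card_le_exp {X : Type*} {T : X → X} {F : Set X}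
    {U : SetRel X X} {L : EReal} (p : ℕ)
    (h : ∀ n, 0 < n → ∀ s : Finset X, IsDynNetIn T F U n s →
      (s.card : ℝ≥0∞) ≤ EReal.exp (((n + p : ℕ) : EReal) * L)) :
    netEntropyEntourage T F U ≤ L :=
  expGrowthSup_le_of_eventually_le_exp_mul p <| (eventually_gt_atTop 0).mono fun n hn => by
    simp only [netMaxcard, ENat.toENNReal_iSup]
    exact iSup₂_le fun s hs => by exact_mod_cast h n hn s hs

lemma Dynamics.IsDynNetIn.card_pow_le_ncard_ptsOfPeriod {X : Type*} [MetricSpace X]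
    {f : X → X} {F : Set X} {δ : ℝ} {U : SetRel X X}
    (hU : ∀ ⦃a b : X⦄, dist a b < δ → (a, b) ∈ U)
    {n p q m : ℕ} {s : Finset X} (hs : IsDynNetIn f F U n s)
    (hshadow : ∀ y : Fin q → X, ∃ x, IsPeriodicPt f m x ∧
      ∀ i : Fin q, ∀ k < n, dist (f^[i * (n + p) + k] x) (f^[k] (y i)) < δ)
    (hfin : (ptsOfPeriod f m).Finite) :
    s.card ^ q ≤ (ptsOfPeriod f m).ncard := by
  choose Φ hΦper hΦshadow using fun e : Fin q → s => hshadow fun i => e i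
  have hball : ∀ e (i : Fin q), f^[i * (n + p)] (Φ e) ∈ UniformSpace.ball (e i : X) (dynEntourage f U n) :=
    fun e i => mem_dynEntourage.2 fun k hk => by
      rw [← iterate_add_apply, add_comm k]
      exact hU (dist_comm (α := X) _ _ ▸ hΦshadow e i k hk)
  have hinj : Injective fun e => (⟨Φ e, hΦper e⟩ : ptsOfPeriod f m) := by
    intro e e' h
    funext i
    by_contra hne
    refine disjoint_left.1 (hs.2 (e i).2 (e' i).2 (Subtype.coe_injective.ne hne)) (hball e i) ?_
    rw [show Φ e = Φ e' from congrArg Subtype.val h]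
    exact hball e' i
  have := hfin.to_subtype
  calc s.card ^ q = Nat.card (Fin q → s) := by simp
    _ ≤ Nat.card (ptsOfPeriod f m) := Nat.card_le_card_of_injective _ hinj
    _ = (ptsOfPeriod f m).ncard := Nat.card_coe_set_eq _

section PeriodicPoints

variable {X : Type*} [MetricSpace X] {f : X ≃ₜ X}

lemma ExpansiveHomeo.exists_isDynNetIn_ptsOfPeriod (hf : ExpansiveHomeo f) :
    ∃ U ∈ 𝓤 X, ∀ m, m ≠ 0 → IsDynNetIn f univ U m (ptsOfPeriod f m) := by
  obtain ⟨ε, hε, hsep⟩ := hf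
  refine ⟨{q | dist q.1 q.2 ≤ ε / 2}, Metric.mem_uniformity_dist.2 ⟨ε / 2, by positivity,
    fun _ _ hab => hab.le⟩, fun m hm => ⟨subset_univ _, fun x hx y hy hxy => ?_⟩⟩
  refine disjoint_left.2 fun z hxz hyz => ?_
  obtain ⟨j, hj⟩ := hsep x y hxy
  have hper : ∀ w ∈ ptsOfPeriod f m, (f.toEquiv ^ m) w = w := fun w hw => by
    simpa [Equiv.Perm.coe_pow] using hw.eq
  -- periodicity moves the separating time `j ∈ ℤ` into the window `[0, m)`
  rw [Equiv.Perm.zpow_apply_eq_pow_emod _ hm (hper x hx),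
    Equiv.Perm.zpow_apply_eq_pow_emod _ hm (hper y hy), Equiv.Perm.coe_pow] at hj
  have hk : (j % m).toNat < m := by
    have := Int.emod_lt_of_pos j (by omega : (0 : ℤ) < m)
    omega
  have hxz' := mem_dynEntourage.1 hxz _ hk
  have hyz' := mem_dynEntourage.1 hyz _ hk
  simp only [Homeomorph.coe_toEquiv, mem_ofPred_eq] at hj hxz' hyz'
  linarith [dist_triangle_right ((⇑f)^[(j % m).toNat] x) ((⇑f)^[(j % m).toNat] y)
    ((⇑f)^[(j % m).toNat] z)]

lemma ExpansiveHomeo.finite_ptsOfPeriod [CompactSpace X] (hf : ExpansiveHomeo f) {m : ℕ}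
    (hm : m ≠ 0) : (ptsOfPeriod f m).Finite := by
  obtain ⟨U, hU, hnet⟩ := hf.exists_isDynNetIn_ptsOfPeriod
  exact (hnet m hm).finite ((netMaxcard_le_coverMincard _ _ _).trans_lt
    (coverMincard_finite_of_isCompact_invariant isCompact_univ (mapsTo_univ _ _) hU m)).ne

lemma ExpansiveHomeo.exists_expGrowthSup_ncard_ptsOfPeriod_le (hf : ExpansiveHomeo f) :
    ∃ U ∈ 𝓤 X, expGrowthSup (fun m => ((ptsOfPeriod f m).ncard : ℝ≥0∞)) ≤
      netEntropyEntourage f univ U := by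
  obtain ⟨U, hU, hnet⟩ := hf.exists_isDynNetIn_ptsOfPeriod
  refine ⟨U, hU, expGrowthSup_eventually_monotone <| (eventually_ne_atTop 0).mono fun m hm => ?_⟩
  simpa only [ENat.toENNReal_coe] using ENat.toENNReal_mono (hnet m hm).ncard_le_netMaxcard

lemma SpecificationHomeo.exists_isPeriodicPt_shadowing (hf : SpecificationHomeo f) {δ : ℝ}
    (hδ : 0 < δ) :
    ∃ p : ℕ, ∀ n q m : ℕ, 0 < n → q * (n + p) ≤ m → ∀ y : Fin q → X, ∃ x, IsPeriodicPt f m x ∧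
      ∀ i : Fin q, ∀ k < n, dist (f^[i * (n + p) + k] x) (f^[k] (y i)) < δ := by
  obtain ⟨p, hp⟩ := hf δ hδ
  refine ⟨p, fun n q m hn hqm y => ?_⟩
  set l : Fin q → ℤ := fun i => (i * (n + p) : ℕ)
  have hbounds : ∀ i, 0 ≤ l i ∧ l i ≤ l i + n - 1 ∧ l i + n - 1 ≤ m - p := fun i => by
    have : (i + 1) * (n + p) ≤ q * (n + p) := Nat.mul_le_mul_right _ i.isLt
    zify at this hqm
    simp only [l]
    push_cast
    refine ⟨by positivity, by omega, by linarith⟩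
  have hgap : ∀ i j : Fin q, i < j → ∀ s ∈ Icc (l i) (l i + n - 1), ∀ t ∈ Icc (l j) (l j + n - 1),
      (p : ℤ) ≤ t - s := fun i j hij s hs t ht => by
    have : (i + 1) * (n + p) ≤ j * (n + p) := Nat.mul_le_mul_right _ hij
    zify at this
    simp only [l, mem_Icc] at hs ht
    push_cast at hs ht
    linarith
  have hsep : ∀ i j, i ≠ j → ∀ s ∈ Icc (l i) (l i + n - 1), ∀ t ∈ Icc (l j) (l j + n - 1),
      (p : ℤ) ≤ |s - t| := fun i j hij s hs t ht => by
    rcases hij.lt_or_gt with hij | hij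
    · exact (hgap i j hij s hs t ht).trans (abs_sub_comm s t ▸ le_abs_self _)
    · exact (hgap j i hij t ht s hs).trans (le_abs_self _)
  -- specification compares orbits at equal absolute times, so `y i` is pulled back by `l i`
  obtain ⟨x, hper, hshadow⟩ := hp q (fun i => (f.toEquiv ^ (-l i)) (y i)) 0 (m - p) l
    (fun i => l i + n - 1) hbounds hsep
  refine ⟨x, ?_, fun i k hk => ?_⟩
  · rwa [show (m : ℤ) - p - 0 + p = m by ring, Homeomorph.toEquiv_zpow_natCast_apply] at hper
  · have hmem : l i + k ∈ Icc (l i) (l i + n - 1) := ⟨by omega, by omega⟩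
    have hx : (f.toEquiv ^ (l i + k)) x = f^[i * (n + p) + k] x := by
      rw [← Homeomorph.toEquiv_zpow_natCast_apply]
      push_cast
      rfl
    have hy : (f.toEquiv ^ (l i + k)) ((f.toEquiv ^ (-l i)) (y i)) = f^[k] (y i) := by
      rw [← Equiv.Perm.mul_apply, ← zpow_add, show l i + k + -l i = k by ring,
        Homeomorph.toEquiv_zpow_natCast_apply]
    simpa only [hx, hy] using hshadow i _ hmem

lemma SpecificationHomeo.nonempty_ptsOfPeriod (hf : SpecificationHomeo f) (m : ℕ) :
    (ptsOfPeriod f m).Nonempty := by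
  obtain ⟨p, hp⟩ := hf.exists_isPeriodicPt_shadowing one_pos
  obtain ⟨x, hx, -⟩ := hp 1 0 m one_pos (by simp) Fin.elim0
  exact ⟨x, hx⟩

lemma SpecificationHomeo.netEntropyEntourage_le_expGrowthInf_ncard_ptsOfPeriod
    (hf : SpecificationHomeo f) (hfin : ∀ m, m ≠ 0 → (ptsOfPeriod f m).Finite) {U : SetRel X X}
    (hU : U ∈ 𝓤 X) :
    netEntropyEntourage f univ U ≤ expGrowthInf fun m => ((ptsOfPeriod f m).ncard : ℝ≥0∞) := by
  obtain ⟨δ, hδ, hδU⟩ := Metric.mem_uniformity_dist.1 hU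
  obtain ⟨p, hp⟩ := hf.exists_isPeriodicPt_shadowing hδ
  refine netEntropyEntourage_le_of_card_le_exp p fun n hn s hs =>
    le_exp_mul_expGrowthInf_of_pow_div_le (by omega) <|
      (eventually_ne_atTop 0).mono fun m hm => ?_
  exact_mod_cast hs.card_pow_le_ncard_ptsOfPeriod hδU (hp n _ m hn (Nat.div_mul_le_self m _))
    (hfin m hm)

end PeriodicPoints

theorem growth_rate_synchronization_eq_exp_entropy_general
    {X : Type*} [MetricSpace X] [CompactSpace X]
    (α β : X ≃ₜ X)
    (hcomm : ∀ x : X, α (β x) = β (α x))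
    (f : X ≃ₜ X) (hf : f = α.trans β.symm)
    (hexp : ExpansiveHomeo f)
    (hspec : SpecificationHomeo f) :
    Tendsto (fun n : ℕ =>
        (Nat.card {x : X | (⇑α)^[n] x = (⇑β)^[n] x} : ℝ) ^ ((1 : ℝ) / n))
      atTop
      (nhds (Real.exp (Dynamics.coverEntropy (⇑f) Set.univ).toReal)) := by
  have hsync (n : ℕ) : {x : X | (⇑α)^[n] x = (⇑β)^[n] x} = ptsOfPeriod f n :=
    hf ▸ Function.Commute.setOf_iterate_eq_iterate_eq (β := β.toEquiv) hcomm n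
  have hfin (m : ℕ) (hm : m ≠ 0) : (ptsOfPeriod f m).Finite := hexp.finite_ptsOfPeriod hm
  obtain ⟨U, hU, hsup⟩ := hexp.exists_expGrowthSup_ncard_ptsOfPeriod_le
  have hinf : coverEntropy f univ ≤ expGrowthInf fun m => ((ptsOfPeriod f m).ncard : ℝ≥0∞) :=
    coverEntropy_eq_iSup_netEntropyEntourage (T := f) univ ▸
      iSup₂_le fun V hV => hspec.netEntropyEntourage_le_expGrowthInf_ncard_ptsOfPeriod hfin hV
  have hfinite : netEntropyEntourage f univ U < ⊤ :=
    (netEntropyEntourage_le_coverEntropyEntourage _ _).trans_lt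
      (coverEntropyEntourage_finite_of_isCompact_invariant isCompact_univ (mapsTo_univ _ _) hU)
  simp_rw [hsync, Nat.card_coe_set_eq]
  exact tendsto_rpow_one_div_of_le_expGrowthInf_of_expGrowthSup_le
    ((eventually_ne_atTop 0).mono fun m hm =>
      ((ncard_pos (hfin m hm)).2 (hspec.nonempty_ptsOfPeriod m)).ne')
    hinf (hsup.trans (netEntropyEntourage_le_coverEntropy _ _ hU))
    (hinf.trans_lt (expGrowthInf_le_expGrowthSup.trans_lt (hsup.trans_lt hfinite))).ne

/-- Let `(X, d)` be a compact metric space and `α, β : X → X` commuting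
homeomorphisms forming a synchronously tame pair, and set `f := β⁻¹ ∘ α`. If `f` is
expansive and satisfies specification, then the growth rate of synchronization points
exists and `lim (#S(αⁿ, βⁿ))^{1/n} = exp (h(f))`, where `h(f)` is the topological entropy
of `f`. -/
theorem growth_rate_synchronization_eq_exp_entropy
    {X : Type*} [MetricSpace X] [CompactSpace X]
    (α β : X ≃ₜ X)
    (hcomm : ∀ x : X, α (β x) = β (α x))
    (htame : ∀ n : ℕ, 1 ≤ n → {x : X | (⇑α)^[n] x = (⇑β)^[n] x}.Finite)
    (f : X ≃ₜ X) (hf : f = α.trans β.symm)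
    (hexp : ExpansiveHomeo f)
    (hspec : SpecificationHomeo f) :
    Tendsto (fun n : ℕ =>
        (Nat.card {x : X | (⇑α)^[n] x = (⇑β)^[n] x} : ℝ) ^ ((1 : ℝ) / n))
      atTop
      (nhds (Real.exp (Dynamics.coverEntropy (⇑f) Set.univ).toReal)) :=
  growth_rate_synchronization_eq_exp_entropy_general α β hcomm f hf hexp hspec
end

section
/- Let (X, d) be a compact metric space and f : X → X an expansive homeomorphism (there exists ε > 0 such that for all x ≠ y in X there is n ∈ ℤ with d(f^n x, f^n y) > ε) satisfying specification (for each ε > 0 there is p(ε) ∈ ℕ such that: given points x_1, …, x_k ∈ X and integer intervals I_1, …, I_k contained in [a, b] with pairwise distance at least p(ε), there exists x ∈ X with f^{b−a+p(ε)}(x) = x and d(f^j x, f^j x_i) < ε for all j ∈ I_i and all i). Then the fixed-point sets Fix(f^n) are finite and there exist constants A, B > 0 and N ∈ ℕ such that for all n ≥ N, A·exp(h(f)·n) ≤ #Fix(f^n) ≤ B·exp(h(f)·n), where h(f) is the topological entropy of f. -/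
open Function Set Filter Dynamics UniformSpace ExpGrowth
open scoped ENNReal Topology Uniformity SetRel

section DistEntourage

variable {X : Type*} [PseudoMetricSpace X] {T : X → X} {F s : Set X} {n : ℕ} {r : ℝ}

def closedDistEntourage (X : Type*) [PseudoMetricSpace X] (r : ℝ) : SetRel X X :=
  {p | dist p.1 p.2 ≤ r}

instance closedDistEntourage.isSymm : (closedDistEntourage X r).IsSymm :=
  ⟨fun x y h => (dist_comm y x).trans_le h⟩

lemma closedDistEntourage.isRefl (hr : 0 ≤ r) : (closedDistEntourage X r).IsRefl :=
  ⟨fun x => (dist_self x).trans_le hr⟩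

lemma closedDistEntourage_mem_uniformity (hr : 0 < r) : closedDistEntourage X r ∈ 𝓤 X :=
  Metric.uniformity_basis_dist_le.mem_of_mem hr

lemma closedDistEntourage_comp_subset {s t : ℝ} (h : r + s ≤ t) :
    closedDistEntourage X r ○ closedDistEntourage X s ⊆ closedDistEntourage X t :=
  fun ⟨_, _⟩ ⟨z, hxz, hzy⟩ => ((dist_triangle _ z _).trans (add_le_add hxz hzy)).trans h

lemma pairwiseDisjoint_ball_dynEntourage_closedDistEntourage
    (h : s.Pairwise fun x y => ∃ k < n, 2 * r < dist (T^[k] x) (T^[k] y)) :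
    s.PairwiseDisjoint fun x => ball x (dynEntourage T (closedDistEntourage X r) n) := by
  intro x hx y hy hxy
  obtain ⟨k, hk, hsep⟩ := h hx hy hxy
  refine disjoint_left.2 fun z hzx hzy => ?_
  have hxz : dist (T^[k] x) (T^[k] z) ≤ r := mem_ball_dynEntourage.1 hzx k hk
  have hyz : dist (T^[k] y) (T^[k] z) ≤ r := mem_ball_dynEntourage.1 hzy k hk
  linarith [dist_triangle_right (T^[k] x) (T^[k] y) (T^[k] z)]

lemma Dynamics.IsDynNetIn.exists_lt_dist (hs : IsDynNetIn T F (closedDistEntourage X r) n s)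
    (hr : 0 ≤ r) {x y : X} (hx : x ∈ s) (hy : y ∈ s) (hxy : x ≠ y) :
    ∃ k < n, r < dist (T^[k] x) (T^[k] y) := by
  by_contra! hclose
  exact disjoint_left.1 (hs.2 hx hy hxy) (mem_ball_dynEntourage.2 hclose)
    (mem_ball_dynEntourage.2 fun k _ => (dist_self _).trans_le hr)

lemma card_le_netMaxcard_of_pairwise_lt_dist {ι : Type*} [Fintype ι] (φ : ι → X)
    (hr : 0 ≤ r) (h : Pairwise fun a b => ∃ k < n, 2 * r < dist (T^[k] (φ a)) (T^[k] (φ b))) :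
    (Fintype.card ι : ℕ∞) ≤ netMaxcard T univ (closedDistEntourage X r) n := by
  classical
  have hφ : Injective φ := fun a b hab => by
    by_contra hne
    obtain ⟨k, -, hk⟩ := h hne
    rw [hab, dist_self] at hk
    linarith
  have hnet :
      IsDynNetIn T univ (closedDistEntourage X r) n (Finset.univ.image φ : Finset X) := by
    refine ⟨subset_univ _, pairwiseDisjoint_ball_dynEntourage_closedDistEntourage ?_⟩
    simp only [Finset.coe_image, Finset.coe_univ, image_univ]
    rintro _ ⟨a, rfl⟩ _ ⟨b, rfl⟩ hab
    exact h (ne_of_apply_ne φ hab)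
  simpa [Finset.card_image_of_injective _ hφ] using hnet.card_le_netMaxcard

end DistEntourage

lemma Dynamics.IsDynNetIn.finite_s18 {X : Type*} [UniformSpace X] {T : X → X} {F s : Set X}
    {U : SetRel X X} {n : ℕ} (hF : IsCompact F) (hT : MapsTo T F F) (hU : U ∈ 𝓤 X)
    (hs : IsDynNetIn T F U n s) : s.Finite := by
  obtain ⟨K, hK⟩ := ENat.ne_top_iff_exists.1
    ((netMaxcard_le_coverMincard T F n).trans_lt
      (coverMincard_finite_of_isCompact_invariant hF hT hU n)).ne
  by_contra hinf
  obtain ⟨t, hts, htcard⟩ := Set.Infinite.exists_subset_card_eq hinf (K + 1)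
  have ht : IsDynNetIn T F U n t := ⟨hts.trans hs.1, hs.2.subset hts⟩
  have := ht.card_le_netMaxcard
  rw [htcard, ← hK, Nat.cast_le] at this
  omega

lemma ExpGrowth.expGrowthSup_comp_add {u : ℕ → ℝ≥0∞} (hu : Monotone u) (k : ℕ) :
    expGrowthSup (fun n => u (n + k)) = expGrowthSup u := by
  refine (hu.expGrowthSup_comp (v := (· + k)) (a := 1) ?_ one_ne_zero (EReal.coe_ne_top 1)).trans
    (one_mul _)
  have hlim : Tendsto (fun n : ℕ => ((1 + k / n : ℝ) : EReal)) atTop (𝓝 1) := by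
    have := (tendsto_const_div_atTop_nhds_zero_nat (k : ℝ)).const_add 1
    rw [add_zero] at this
    exact_mod_cast (continuous_coe_real_ereal.tendsto 1).comp this
  refine hlim.congr' (eventually_ge_atTop 1 |>.mono fun n hn => ?_)
  have hn' : (n : ℝ) ≠ 0 := by positivity
  show _ = ((n + k : ℕ) : EReal) / (n : EReal)
  rw [← EReal.coe_natCast, ← EReal.coe_natCast, ← EReal.coe_div]
  congr 1
  push_cast
  field_simp

namespace Homeomorph

variable {X : Type*} [TopologicalSpace X] (f : X ≃ₜ X)

lemma toEquiv_zpow_natCast_apply_s18 (n : ℕ) (x : X) : (f.toEquiv ^ (n : ℤ)) x = f^[n] x := by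
  rw [zpow_natCast, Equiv.Perm.coe_pow]
  rfl

lemma iterate_toEquiv_zpow_apply (k : ℕ) (m : ℤ) (x : X) :
    f^[k] ((f.toEquiv ^ m) x) = (f.toEquiv ^ (k + m)) x := by
  rw [← toEquiv_zpow_natCast_apply_s18, zpow_add, Equiv.Perm.mul_apply]

lemma continuous_toEquiv_zpow (m : ℤ) : Continuous ⇑(f.toEquiv ^ m) := by
  induction m using Int.induction_on with
  | zero => exact continuous_id
  | succ k ih => rw [zpow_add_one, Equiv.Perm.coe_mul]; exact ih.comp f.continuous
  | pred k ih => rw [zpow_sub_one, Equiv.Perm.coe_mul]; exact ih.comp f.symm.continuous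

lemma toEquiv_zpow_apply_of_isPeriodicPt {n : ℕ} (hn : 0 < n) {x : X}
    (hx : IsPeriodicPt f n x) (m : ℤ) (c : ℕ) :
    (f.toEquiv ^ m) x = f^[c + ((m - c) % n).toNat] x := by
  have hxn : (f.toEquiv ^ (n : ℤ)) x = x := (f.toEquiv_zpow_natCast_apply_s18 n x).trans hx
  have hm : m = (c + (m - c) % n) + n * ((m - c) / n) := by rw [Int.emod_def]; ring
  rw [← toEquiv_zpow_natCast_apply_s18, Nat.cast_add,
    Int.toNat_of_nonneg (Int.emod_nonneg _ (by omega))]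
  nth_rewrite 1 [hm]
  rw [zpow_add, Equiv.Perm.mul_apply, zpow_mul,
    Equiv.Perm.zpow_apply_eq_self_of_apply_eq_self hxn]

end Homeomorph

section Expansive

variable {X : Type*} [PseudoMetricSpace X] {f : X ≃ₜ X} {e : ℝ}

def IsExpansiveConstant (f : X ≃ₜ X) (e : ℝ) : Prop :=
  ∀ x y : X, x ≠ y → ∃ n : ℤ, e < dist ((f.toEquiv ^ n) x) ((f.toEquiv ^ n) y)

lemma exists_lt_dist_iterate_shift {σ : ℝ} {N : ℕ}
    (hN : ∀ x y : X, σ ≤ dist x y →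
      ∃ i : ℤ, |i| ≤ N ∧ e < dist ((f.toEquiv ^ i) x) ((f.toEquiv ^ i) y))
    {x y : X} {k j : ℕ} (hk : k < j) (hxy : σ ≤ dist (f^[k] x) (f^[k] y)) :
    ∃ t < j + 2 * N, e < dist (f^[t] ((f.toEquiv ^ (-N : ℤ)) x))
      (f^[t] ((f.toEquiv ^ (-N : ℤ)) y)) := by
  obtain ⟨i, hiN, hi⟩ := hN _ _ hxy
  obtain ⟨hil, hir⟩ := abs_le.1 hiN
  refine ⟨(k + i + N).toNat, by omega, ?_⟩
  have hshift : ∀ z : X, f^[(k + i + N).toNat] ((f.toEquiv ^ (-N : ℤ)) z)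
      = (f.toEquiv ^ i) (f^[k] z) := fun z => by
    rw [f.iterate_toEquiv_zpow_apply, ← f.toEquiv_zpow_natCast_apply_s18, ← Equiv.Perm.mul_apply,
      ← zpow_add, Int.toNat_of_nonneg (by omega)]
    congr 2
    ring
  rwa [hshift, hshift]

namespace IsExpansiveConstant

lemma exists_lt_dist_iterate_of_isPeriodicPt (he : IsExpansiveConstant f e) {n : ℕ} (hn : 0 < n)
    {x y : X} (hx : IsPeriodicPt f n x) (hy : IsPeriodicPt f n y) (hxy : x ≠ y) (c : ℕ) :
    ∃ j < n, e < dist (f^[c + j] x) (f^[c + j] y) := by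
  obtain ⟨m, hm⟩ := he x y hxy
  refine ⟨((m - c) % n).toNat, ?_, ?_⟩
  · have := Int.emod_lt_of_pos (m - c) (Int.natCast_pos.2 hn)
    omega
  · rwa [f.toEquiv_zpow_apply_of_isPeriodicPt hn hx m c,
      f.toEquiv_zpow_apply_of_isPeriodicPt hn hy m c] at hm

lemma isDynNetIn_ptsOfPeriod (he : IsExpansiveConstant f e) (he0 : 0 < e) {n : ℕ} (hn : 0 < n) :
    IsDynNetIn f univ (closedDistEntourage X (e / 3)) n (ptsOfPeriod f n) := by
  refine ⟨subset_univ _, pairwiseDisjoint_ball_dynEntourage_closedDistEntourage ?_⟩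
  intro x hx y hy hxy
  obtain ⟨j, hj, hsep⟩ := he.exists_lt_dist_iterate_of_isPeriodicPt hn hx hy hxy 0
  exact ⟨j, hj, by rw [zero_add] at hsep; linarith⟩

lemma finite_ptsOfPeriod [CompactSpace X] (he : IsExpansiveConstant f e) (he0 : 0 < e) {n : ℕ}
    (hn : 0 < n) : (ptsOfPeriod f n).Finite :=
  (he.isDynNetIn_ptsOfPeriod he0 hn).finite_s18 isCompact_univ (mapsTo_univ _ _)
    (closedDistEntourage_mem_uniformity (by positivity))

lemma exists_uniform_separation [CompactSpace X] (he : IsExpansiveConstant f e) {σ : ℝ}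
    (hσ : 0 < σ) :
    ∃ N : ℕ, ∀ x y : X, σ ≤ dist x y →
      ∃ i : ℤ, |i| ≤ N ∧ e < dist ((f.toEquiv ^ i) x) ((f.toEquiv ^ i) y) := by
  have hK : IsCompact {p : X × X | σ ≤ dist p.1 p.2} :=
    (isClosed_le continuous_const continuous_dist).isCompact
  obtain ⟨t, ht⟩ := hK.elim_finite_subcover
    (fun i : ℤ => {p : X × X | e < dist ((f.toEquiv ^ i) p.1) ((f.toEquiv ^ i) p.2)})
    (fun i => isOpen_lt continuous_const
      (((f.continuous_toEquiv_zpow i).comp continuous_fst).dist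
        ((f.continuous_toEquiv_zpow i).comp continuous_snd)))
    (fun p hp => mem_iUnion.2 (he p.1 p.2 fun h => hσ.not_ge (by simpa [h] using hp)))
  refine ⟨t.sup Int.natAbs, fun x y hxy => ?_⟩
  obtain ⟨i, hi, hsep⟩ := mem_iUnion₂.1 (ht (show (x, y) ∈ _ from hxy))
  refine ⟨i, ?_, hsep⟩
  rw [Int.abs_eq_natAbs, Nat.cast_le]
  exact Finset.le_sup (f := Int.natAbs) hi

lemma exists_netMaxcard_le [CompactSpace X] (he : IsExpansiveConstant f e) (he0 : 0 < e)
    {σ : ℝ} (hσ : 0 < σ) : ∃ N : ℕ, ∀ j : ℕ,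
      netMaxcard f univ (closedDistEntourage X σ) j
        ≤ netMaxcard f univ (closedDistEntourage X (e / 3)) (j + 2 * N) := by
  classical
  obtain ⟨N, hN⟩ := he.exists_uniform_separation hσ
  refine ⟨N, fun j => iSup₂_le fun s hs => ?_⟩
  have hnet : IsDynNetIn f univ (closedDistEntourage X (e / 3)) (j + 2 * N)
      (s.image (f.toEquiv ^ (-N : ℤ)) : Finset X) := by
    refine ⟨subset_univ _, pairwiseDisjoint_ball_dynEntourage_closedDistEntourage ?_⟩
    rw [Finset.coe_image]
    rintro _ ⟨x, hx, rfl⟩ _ ⟨y, hy, rfl⟩ hxy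
    obtain ⟨k, hk, hsep⟩ := IsDynNetIn.exists_lt_dist hs hσ.le hx hy (ne_of_apply_ne _ hxy)
    obtain ⟨t, ht, hsep'⟩ := exists_lt_dist_iterate_shift hN hk hsep.le
    exact ⟨t, ht, by linarith⟩
  simpa [Finset.card_image_of_injective _ (Equiv.injective _)] using hnet.card_le_netMaxcard

lemma coverEntropy_le_coverEntropyEntourage [CompactSpace X] (he : IsExpansiveConstant f e)
    (he0 : 0 < e) :
    coverEntropy f univ ≤ coverEntropyEntourage f univ (closedDistEntourage X (e / 3)) := by
  rw [coverEntropy_eq_iSup_basis_netEntropyEntourage Metric.uniformity_basis_dist_le]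
  refine iSup₂_le fun σ hσ => ?_
  obtain ⟨N, hN⟩ := he.exists_netMaxcard_le he0 hσ
  calc netEntropyEntourage f univ (closedDistEntourage X σ)
      ≤ expGrowthSup fun j => coverMincard f univ (closedDistEntourage X (e / 3)) (j + 2 * N) :=
        expGrowthSup_monotone fun j =>
          ENat.toENNReal_mono ((hN j).trans (netMaxcard_le_coverMincard _ _ _))
    _ = coverEntropyEntourage f univ (closedDistEntourage X (e / 3)) :=
        expGrowthSup_comp_add
          (fun _ _ h => ENat.toENNReal_mono (coverMincard_monotone_time _ _ _ h)) _

lemma coverEntropy_le_log_coverMincard_div [CompactSpace X] (he : IsExpansiveConstant f e)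
    (he0 : 0 < e) {m : ℕ} (hm : m ≠ 0) :
    coverEntropy f univ
      ≤ ENNReal.log (coverMincard f univ (closedDistEntourage X (e / 6)) m) / m :=
  (he.coverEntropy_le_coverEntropyEntourage he0).trans <|
    (coverEntropyEntourage_antitone _ _ (closedDistEntourage_comp_subset (by linarith))).trans
      (coverEntropyEntourage_le_log_coverMincard_div (mapsTo_univ _ _) hm)

lemma coverEntropy_lt_top [CompactSpace X] (he : IsExpansiveConstant f e) (he0 : 0 < e) :
    coverEntropy f univ < ⊤ :=
  (he.coverEntropy_le_coverEntropyEntourage he0).trans_lt <|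
    coverEntropyEntourage_finite_of_isCompact_invariant isCompact_univ (mapsTo_univ _ _)
      (closedDistEntourage_mem_uniformity (by positivity))

lemma coe_toReal_coverEntropy [CompactSpace X] [Nonempty X] (he : IsExpansiveConstant f e)
    (he0 : 0 < e) : ((coverEntropy f univ).toReal : EReal) = coverEntropy f univ :=
  EReal.coe_toReal (he.coverEntropy_lt_top he0).ne
    ((coverEntropy_nonneg f univ_nonempty).trans_lt' EReal.bot_lt_zero).ne'

end IsExpansiveConstant

end Expansive

section Specification

variable {X : Type*} [PseudoMetricSpace X] {f : X ≃ₜ X} {ε r : ℝ} {p : ℕ}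

def IsSpecificationGap (f : X ≃ₜ X) (ε : ℝ) (p : ℕ) : Prop :=
  ∀ (k : ℕ) (x : Fin k → X) (a b : ℤ) (l u : Fin k → ℤ),
    (∀ i, a ≤ l i ∧ l i ≤ u i ∧ u i ≤ b) →
    (∀ i j, i ≠ j → ∀ s ∈ Icc (l i) (u i), ∀ t ∈ Icc (l j) (u j),
      (p : ℤ) ≤ |s - t|) →
    ∃ x₀ : X, (f.toEquiv ^ (b - a + p)) x₀ = x₀ ∧
      ∀ i, ∀ m ∈ Icc (l i) (u i), dist ((f.toEquiv ^ m) x₀) ((f.toEquiv ^ m) (x i)) < ε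

namespace IsSpecificationGap

lemma exists_isPeriodicPt_forall_dist_lt (hp : IsSpecificationGap f ε p) (x : X) (m : ℕ) :
    ∃ z, IsPeriodicPt f (m + p) z ∧ ∀ j ≤ m, dist (f^[j] z) (f^[j] x) < ε := by
  obtain ⟨z, hz, hshadow⟩ := hp 1 (fun _ => x) 0 m (fun _ => 0) (fun _ => m)
    (fun _ => ⟨le_rfl, by positivity, le_rfl⟩)
    (fun i j hij => absurd (Subsingleton.elim i j) hij)
  refine ⟨z, ?_, fun j hj => ?_⟩
  · rwa [sub_zero, ← Nat.cast_add, f.toEquiv_zpow_natCast_apply_s18] at hz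
  · simpa only [f.toEquiv_zpow_natCast_apply_s18] using
      hshadow 0 j ⟨Nat.cast_nonneg j, Nat.cast_le.2 hj⟩

lemma exists_forall_dist_lt_of_blocks (hp : IsSpecificationGap f ε p) {n : ℕ} (hn : 0 < n)
    {k : ℕ} (y : Fin k → X) :
    ∃ z, ∀ i : Fin k, ∀ j < n,
      dist (f^[i * (n + p) + j] z) (f^[i * (n + p) + j] (y i)) < ε := by
  have hstep : ∀ i j : Fin k, i < j → (i : ℤ) * (n + p) + (n + p) ≤ j * (n + p) :=
    fun i j h => by
    have : ((i : ℕ) + 1 : ℤ) ≤ j := by exact_mod_cast h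
    nlinarith
  have hbounds : ∀ i : Fin k, 0 ≤ (i : ℤ) * (n + p) ∧
      (i : ℤ) * (n + p) ≤ i * (n + p) + (n - 1) ∧
      (i : ℤ) * (n + p) + (n - 1) ≤ k * (n + p) :=
    fun i => by
    have hi : (i : ℤ) + 1 ≤ k := by exact_mod_cast i.isLt
    exact ⟨by positivity, by omega, by nlinarith⟩
  have hgaps : ∀ i j : Fin k, i ≠ j →
      ∀ s ∈ Icc ((i : ℤ) * (n + p)) (i * (n + p) + (n - 1)),
      ∀ t ∈ Icc ((j : ℤ) * (n + p)) (j * (n + p) + (n - 1)), (p : ℤ) ≤ |s - t| := by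
    rintro i j hij s ⟨hs1, hs2⟩ t ⟨ht1, ht2⟩
    rcases lt_or_gt_of_ne hij with h | h
    · have := hstep i j h
      rw [abs_sub_comm, le_abs]
      omega
    · have := hstep j i h
      rw [le_abs]
      omega
  obtain ⟨z, -, hz⟩ := hp k y 0 (k * (n + p)) _ _ hbounds hgaps
  refine ⟨z, fun i j hj => ?_⟩
  simpa only [f.toEquiv_zpow_natCast_apply_s18] using
    hz i (i * (n + p) + j : ℕ) ⟨by push_cast; omega, by push_cast; omega⟩

lemma netMaxcard_le_card_ptsOfPeriod (hp : IsSpecificationGap f ε p) (hεr : 2 * ε ≤ r)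
    (hr : 0 ≤ r) (m : ℕ) (hfin : (ptsOfPeriod f (m + p)).Finite) :
    netMaxcard f univ (closedDistEntourage X r) (m + 1) ≤ Nat.card (ptsOfPeriod f (m + p)) := by
  classical
  refine iSup₂_le fun s hs => ?_
  choose z hz using fun x => hp.exists_isPeriodicPt_forall_dist_lt x m
  have hinj : InjOn z s := fun x hx y hy hxy => by
    by_contra hne
    obtain ⟨k, hk, hsep⟩ := IsDynNetIn.exists_lt_dist hs hr hx hy hne
    have hx' := (hz x).2 k (by omega)
    have hy' := (hz y).2 k (by omega)
    rw [hxy] at hx'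
    linarith [dist_triangle_left (f^[k] x) (f^[k] y) (f^[k] (z y))]
  rw [Nat.card_eq_card_finite_toFinset hfin, Nat.cast_le]
  exact Finset.card_le_card_of_injOn z (fun x _ => hfin.mem_toFinset.2 (hz x).1) hinj

end IsSpecificationGap

end Specification

lemma natCast_le_exp_of_log_le {c : ℕ} {x : ℝ} (h : ENNReal.log c ≤ x) :
    (c : ℝ) ≤ Real.exp x := by
  have := EReal.exp_monotone h
  rwa [ENNReal.exp_log, EReal.exp_coe, ← ENNReal.ofReal_natCast,
    ENNReal.ofReal_le_ofReal_iff (Real.exp_pos x).le] at this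

lemma exp_le_natCast_of_le_log {c : ℕ} {x : ℝ} (h : x ≤ ENNReal.log c) :
    Real.exp x ≤ c := by
  have := EReal.exp_monotone h
  rwa [ENNReal.exp_log, EReal.exp_coe, ← ENNReal.ofReal_natCast,
    ENNReal.ofReal_le_ofReal_iff (Nat.cast_nonneg c)] at this

namespace IsExpansiveConstant

variable {X : Type*} [PseudoMetricSpace X] {f : X ≃ₜ X} {e : ℝ} {p n : ℕ}

lemma pow_card_ptsOfPeriod_le_netMaxcard (he : IsExpansiveConstant f e) (he0 : 0 < e)
    (hp : IsSpecificationGap f (e / 4) p) (hn : 0 < n) (hfin : (ptsOfPeriod f n).Finite)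
    (k : ℕ) :
    ((Nat.card (ptsOfPeriod f n) ^ k : ℕ) : ℕ∞)
      ≤ netMaxcard f univ (closedDistEntourage X (e / 4)) ((n + p) * k) := by
  have := hfin.fintype
  choose z hz using fun y : Fin k → ptsOfPeriod f n =>
    hp.exists_forall_dist_lt_of_blocks hn fun i => (y i : X)
  have hsep : Pairwise fun y y' =>
      ∃ t < (n + p) * k, 2 * (e / 4) < dist (f^[t] (z y)) (f^[t] (z y')) := by
    intro y y' hyy'
    obtain ⟨i, hi⟩ := Function.ne_iff.1 hyy'
    obtain ⟨j, hj, hsep⟩ := he.exists_lt_dist_iterate_of_isPeriodicPt hn (y i).2 (y' i).2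
      (Subtype.coe_injective.ne hi) (i * (n + p))
    refine ⟨i * (n + p) + j, ?_, ?_⟩
    · have := Nat.mul_le_mul_right (n + p) (i.isLt : (i : ℕ) + 1 ≤ k)
      nlinarith
    · set t := i * (n + p) + j
      linarith [hz y i j hj, hz y' i j hj, dist_comm (f^[t] (z y)) (f^[t] (y i)),
        dist_triangle4 (f^[t] (y i)) (f^[t] (z y)) (f^[t] (z y')) (f^[t] (y' i))]
  have := card_le_netMaxcard_of_pairwise_lt_dist z (by positivity) hsep
  rwa [Fintype.card_fun, Fintype.card_fin, ← Nat.card_eq_fintype_card] at this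

lemma log_card_ptsOfPeriod_le (he : IsExpansiveConstant f e) (he0 : 0 < e)
    (hp : IsSpecificationGap f (e / 4) p) (hn : 0 < n) (hfin : (ptsOfPeriod f n).Finite) :
    ENNReal.log (Nat.card (ptsOfPeriod f n)) ≤ (n + p : ℕ) * coverEntropy f univ := by
  set U := closedDistEntourage X (e / 4)
  have hnet : Monotone fun j => (netMaxcard f univ U j : ℝ≥0∞) :=
    fun _ _ h => ENat.toENNReal_mono (netMaxcard_monotone_time _ _ _ h)
  calc ENNReal.log (Nat.card (ptsOfPeriod f n))
      = expGrowthSup fun k => (Nat.card (ptsOfPeriod f n) : ℝ≥0∞) ^ k := expGrowthSup_pow.symm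
    _ ≤ expGrowthSup fun k => (netMaxcard f univ U ((n + p) * k) : ℝ≥0∞) :=
        expGrowthSup_monotone fun k => by
          simpa using ENat.toENNReal_mono (he.pow_card_ptsOfPeriod_le_netMaxcard he0 hp hn hfin k)
    _ = (n + p : ℕ) * netEntropyEntourage f univ U := hnet.expGrowthSup_comp_mul (by omega)
    _ ≤ (n + p : ℕ) * coverEntropy f univ := by
        gcongr
        exact netEntropyEntourage_le_coverEntropy _ _
          (closedDistEntourage_mem_uniformity (by positivity))

lemma coverEntropy_le_log_card_ptsOfPeriod_div [CompactSpace X] (he : IsExpansiveConstant f e)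
    (he0 : 0 < e) (hp : IsSpecificationGap f (e / 24) p) (m : ℕ)
    (hfin : (ptsOfPeriod f (m + p)).Finite) :
    coverEntropy f univ ≤ ENNReal.log (Nat.card (ptsOfPeriod f (m + p))) / (m + 1 : ℕ) := by
  have := closedDistEntourage.isRefl (X := X) (r := e / 12) (by positivity)
  refine (he.coverEntropy_le_log_coverMincard_div he0 m.succ_ne_zero).trans <|
    EReal.div_le_div_right_of_nonneg (Nat.cast_nonneg' _) <| ENNReal.log_monotone ?_
  have hcard := (coverMincard_antitone f univ (m + 1)
    (closedDistEntourage_comp_subset (by linarith : e / 12 + e / 12 ≤ e / 6))).trans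
    ((coverMincard_le_netMaxcard f univ (m + 1)).trans
      (hp.netMaxcard_le_card_ptsOfPeriod (by linarith) (by positivity) m hfin))
  exact_mod_cast ENat.toENNReal_mono hcard

variable [CompactSpace X] [Nonempty X]

lemma card_ptsOfPeriod_le_exp (he : IsExpansiveConstant f e) (he0 : 0 < e)
    (hp : IsSpecificationGap f (e / 4) p) (hn : 0 < n) :
    (Nat.card (ptsOfPeriod f n) : ℝ) ≤ Real.exp ((coverEntropy f univ).toReal * (n + p)) := by
  refine natCast_le_exp_of_log_le ?_
  rw [EReal.coe_mul, he.coe_toReal_coverEntropy he0, mul_comm]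
  exact_mod_cast he.log_card_ptsOfPeriod_le he0 hp hn (he.finite_ptsOfPeriod he0 hn)

lemma exp_le_card_ptsOfPeriod (he : IsExpansiveConstant f e) (he0 : 0 < e)
    (hp : IsSpecificationGap f (e / 24) p) {m : ℕ} (hm : 0 < m + p) :
    Real.exp ((coverEntropy f univ).toReal * (m + 1)) ≤ Nat.card (ptsOfPeriod f (m + p)) := by
  refine exp_le_natCast_of_le_log ?_
  have h := he.coverEntropy_le_log_card_ptsOfPeriod_div he0 hp m (he.finite_ptsOfPeriod he0 hm)
  rw [← he.coe_toReal_coverEntropy he0,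
    EReal.le_div_iff_mul_le (by positivity) (EReal.natCast_ne_top _)] at h
  exact_mod_cast h

end IsExpansiveConstant

/-- Let `(X, d)` be a compact metric space and `f : X → X` an expansive
homeomorphism satisfying specification. Then the fixed-point sets `Fix(fⁿ)` are finite and
there are constants `A, B > 0` and `N ∈ ℕ` such that for all `n ≥ N`,
`A·exp(h(f)·n) ≤ #Fix(fⁿ) ≤ B·exp(h(f)·n)`, where `h(f)` is the topological entropy. -/
theorem fixed_points_growth_of_expansive_specification
    {X : Type*} [MetricSpace X] [CompactSpace X]
    (f : X ≃ₜ X)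
    (hexp : ExpansiveHomeo f)
    (hspec : SpecificationHomeo f) :
    (∀ n : ℕ, 1 ≤ n → {x : X | (⇑f)^[n] x = x}.Finite) ∧
    ∃ A B : ℝ, 0 < A ∧ 0 < B ∧ ∃ N : ℕ, ∀ n : ℕ, N ≤ n →
      A * Real.exp ((Dynamics.coverEntropy (⇑f) Set.univ).toReal * n) ≤
          (Nat.card {x : X | (⇑f)^[n] x = x} : ℝ) ∧
        (Nat.card {x : X | (⇑f)^[n] x = x} : ℝ) ≤
          B * Real.exp ((Dynamics.coverEntropy (⇑f) Set.univ).toReal * n) := by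
  obtain ⟨e, he0, he : IsExpansiveConstant f e⟩ := hexp
  obtain ⟨p, hp : IsSpecificationGap f (e / 4) p⟩ := hspec (e / 4) (by positivity)
  obtain ⟨q, hq : IsSpecificationGap f (e / 24) q⟩ := hspec (e / 24) (by positivity)
  -- specification applied to no orbit segments at all still yields a point
  obtain ⟨x₀, -⟩ := hp 0 Fin.elim0 0 0 Fin.elim0 Fin.elim0 (fun i => i.elim0) fun i => i.elim0
  have : Nonempty X := ⟨x₀⟩
  set h := (coverEntropy f univ).toReal
  refine ⟨fun n hn => he.finite_ptsOfPeriod he0 hn, Real.exp (h * (1 - q)), Real.exp (h * p),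
    Real.exp_pos _, Real.exp_pos _, q + 1, fun n hn => ⟨?_, ?_⟩⟩
  · obtain ⟨m, rfl⟩ := Nat.exists_eq_add_of_le' (show q ≤ n by omega)
    calc Real.exp (h * (1 - q)) * Real.exp (h * (m + q : ℕ)) = Real.exp (h * (m + 1)) := by
          rw [← Real.exp_add]; push_cast; ring_nf
      _ ≤ _ := he.exp_le_card_ptsOfPeriod he0 hq (by omega)
  · calc _ ≤ Real.exp (h * (n + p)) := he.card_ptsOfPeriod_le_exp he0 hp (by omega)
      _ = _ := by rw [← Real.exp_add]; ring_nf
end
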